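/- Let F be a 4-flipclass of 𝔖_n. Then the support graph S_F and the time-support graph TS_F are isomorphic as edge-labelled directed graphs; equivalently, the forgetful map (x,i) ↦ x from V(TS_F) to V(S_F) is injective, i.e. any two paths of F passing through the same permutation x pass through x at the same time. -/
import Mathlib


open MvPolynomial

/-- The symmetric group `𝔖ₙ`, realized as permutations of `Fin n`. -/
abbrev Pm (n : ℕ) := Equiv.Perm (Fin n)

/-- The Coxeter length of a permutation: its number of inversions. -/
def len {n : ℕ} (w : Pm n) : ℕ :=
  (Finset.univ.filter fun q : Fin n × Fin n => q.1 < q.2 ∧ w q.2 < w q.1).card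

/-- Edges of the Bruhat graph `B(𝔖ₙ)`: `a → b` iff `b * a⁻¹` is a transposition and
`ℓ(a) < ℓ(b)`.  The label of the edge is `b * a⁻¹`. -/
def BEdge {n : ℕ} (a b : Pm n) : Prop :=
  (b * a⁻¹).IsSwap ∧ len a < len b

/-- Bruhat order: `u ≤ v` iff there is a directed path from `u` to `v` in the Bruhat graph. -/
def bruhatLE {n : ℕ} : Pm n → Pm n → Prop := Relation.ReflTransGen BEdge

/-- Strict Bruhat order. -/
def bruhatLT {n : ℕ} (a b : Pm n) : Prop := bruhatLE a b ∧ a ≠ b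

/-- Covering relation of Bruhat order. -/
def bruhatCov {n : ℕ} (a b : Pm n) : Prop :=
  bruhatLT a b ∧ ∀ z, bruhatLT a z → bruhatLT z b → False

/-- A path of length `h` from `u` to `v` in the Bruhat graph, encoded as a function
`ℕ → 𝔖ₙ` normalized to be constantly `v` from time `h` on. -/
def IsPath (n h : ℕ) (u v : Pm n) (p : ℕ → Pm n) : Prop :=
  p 0 = u ∧ (∀ j, h ≤ j → p j = v) ∧ ∀ i, i < h → BEdge (p i) (p (i + 1))

/-- The `i`-th label (`0 ≤ i ≤ h-1`) of a path. -/
def lab {n : ℕ} (p : ℕ → Pm n) (i : ℕ) : Pm n := p (i + 1) * (p i)⁻¹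

/-- `q` is obtained from `p` by the `i`-th flip (`1 ≤ i ≤ h-1`): they differ exactly at
position `i`. -/
def FlipAt {n : ℕ} (h i : ℕ) (p q : ℕ → Pm n) : Prop :=
  0 < i ∧ i < h ∧ p i ≠ q i ∧ ∀ j, j ≠ i → p j = q j

/-- One application of a flip operator on paths of length `h` from `u` to `v`. -/
def FlipStep (n h : ℕ) (u v : Pm n) (p q : ℕ → Pm n) : Prop :=
  IsPath n h u v p ∧ IsPath n h u v q ∧ ∃ i, FlipAt h i p q

/-- `F` is an `h`-flipclass of paths from `u` to `v`: an orbit of the group generated by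
the flip operators, i.e. a connected component under single flips. -/
def IsFlipclass (n h : ℕ) (u v : Pm n) (F : Set (ℕ → Pm n)) : Prop :=
  ∃ p, IsPath n h u v p ∧ F = {q | Relation.ReflTransGen (FlipStep n h u v) p q}

/-- Vertex set of the support graph `S_F`. -/
def SV (n h : ℕ) (F : Set (ℕ → Pm n)) : Set (Pm n) :=
  {a | ∃ p ∈ F, ∃ i, i ≤ h ∧ p i = a}

/-- Edge relation of the support graph `S_F` (labels are determined: `b * a⁻¹`). -/
def SE (n h : ℕ) (F : Set (ℕ → Pm n)) (a b : Pm n) : Prop :=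
  ∃ p ∈ F, ∃ i, i < h ∧ p i = a ∧ p (i + 1) = b

/-- Vertex set of the time-support graph `TS_F`. -/
def TSV (n h : ℕ) (F : Set (ℕ → Pm n)) : Set (Pm n × ℕ) :=
  {x | x.2 ≤ h ∧ ∃ p ∈ F, p x.2 = x.1}

/-- Edge relation of the time-support graph `TS_F`. -/
def TSE (n h : ℕ) (F : Set (ℕ → Pm n)) (x y : Pm n × ℕ) : Prop :=
  x.2 < h ∧ y.2 = x.2 + 1 ∧ ∃ p ∈ F, p x.2 = x.1 ∧ p (x.2 + 1) = y.1

/-- In-degree of a vertex of `TS_F`. -/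
noncomputable def indeg (n h : ℕ) (F : Set (ℕ → Pm n)) (x : Pm n × ℕ) : ℕ :=
  Set.ncard {w | TSE n h F w x}

/-- Out-degree of a vertex of `TS_F`. -/
noncomputable def outdeg (n h : ℕ) (F : Set (ℕ → Pm n)) (x : Pm n × ℕ) : ℕ :=
  Set.ncard {w | TSE n h F x w}

/-- The `t`-vector of `F`: `tᵢ` is the number of vertices of `TS_F` at time `i`. -/
noncomputable def tvec (n h : ℕ) (F : Set (ℕ → Pm n)) (i : ℕ) : ℕ :=
  Set.ncard {a : Pm n | (a, i) ∈ TSV n h F}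

lemma TSV_finite (n h : ℕ) (F : Set (ℕ → Pm n)) : (TSV n h F).Finite :=
  Set.Finite.subset (Set.finite_univ.prod (Set.finite_Iic h))
    (fun _ hx => Set.mem_prod.mpr ⟨Set.mem_univ _, hx.1⟩)

/-- The `ι`-polynomial of `F`:
`ι_F(x,y,t) = Σ_{(a,i) ∈ V(TS_F)} x^indeg(a,i) y^outdeg(a,i) t^i`
(the variables `x, y, t` are `X 0, X 1, X 2`). -/
noncomputable def iota (n h : ℕ) (F : Set (ℕ → Pm n)) : MvPolynomial (Fin 3) ℤ :=
  ∑ x ∈ (TSV_finite n h F).toFinset,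
    X 0 ^ indeg n h F x * X 1 ^ outdeg n h F x * X 2 ^ x.2

/-- A reflection ordering on the transpositions of `𝔖ₙ`: a total order `⪯` on the set of
transpositions such that for all `a < b < c`, either
`(a,b) ⪯ (a,c) ⪯ (b,c)` or `(b,c) ⪯ (a,c) ⪯ (a,b)`. -/
structure ReflOrder (n : ℕ) where
  le : Pm n → Pm n → Prop
  le_refl : ∀ t : Pm n, t.IsSwap → le t t
  le_antisymm : ∀ s t : Pm n, s.IsSwap → t.IsSwap → le s t → le t s → s = t
  le_trans : ∀ r s t : Pm n, r.IsSwap → s.IsSwap → t.IsSwap → le r s → le s t → le r t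
  le_total : ∀ s t : Pm n, s.IsSwap → t.IsSwap → le s t ∨ le t s
  reflection_cond : ∀ a b c : Fin n, a < b → b < c →
    (le (Equiv.swap a b) (Equiv.swap a c) ∧ le (Equiv.swap a c) (Equiv.swap b c)) ∨
    (le (Equiv.swap b c) (Equiv.swap a c) ∧ le (Equiv.swap a c) (Equiv.swap a b))

/-- A path (of length `h`) is increasing w.r.t. an order `le` on transpositions if its
sequence of labels is weakly increasing. -/
def IncreasingRel {n : ℕ} (h : ℕ) (le : Pm n → Pm n → Prop) (p : ℕ → Pm n) : Prop :=
  ∀ i, i + 1 < h → le (lab p i) (lab p (i + 1))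

/-- The number of increasing paths (w.r.t. a reflection ordering) in `F`. -/
noncomputable def cnt (n h : ℕ) (F : Set (ℕ → Pm n)) (ord : ReflOrder n) : ℕ :=
  Set.ncard {p ∈ F | IncreasingRel h ord.le p}

/-- Lexicographic comparison of the label sequences of two paths of length `h`. -/
def LabelLexLe {n : ℕ} (h : ℕ) (le : Pm n → Pm n → Prop) (p q : ℕ → Pm n) : Prop :=
  (∀ i, i < h → lab p i = lab q i) ∨
  ∃ i, i < h ∧ (∀ j, j < i → lab p j = lab q j) ∧ lab p i ≠ lab q i ∧ le (lab p i) (lab q i)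

/-- A path of length `h` from `(u,0)` to `(v,h)` in the time-support graph `TS_F`,
encoded by its sequence of permutation components. -/
def IsTSPath (n h : ℕ) (F : Set (ℕ → Pm n)) (u v : Pm n) (y : ℕ → Pm n) : Prop :=
  y 0 = u ∧ (∀ j, h ≤ j → y j = v) ∧ ∀ i, i < h → TSE n h F (y i, i) (y (i + 1), i + 1)

/-- The set of labels of the paths of `F`. -/
def labelSet (n h : ℕ) (F : Set (ℕ → Pm n)) : Set (Pm n) :=
  {t | ∃ p ∈ F, ∃ i, i < h ∧ lab p i = t}

/-- Lexicographic order on the transpositions of `𝔖ₙ`: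
`(a,b) ⪯ (c,d)` (with `a<b`, `c<d`) iff `a < c`, or `a = c` and `b ≤ d`. -/
def lexLe (n : ℕ) (s t : Pm n) : Prop :=
  ∃ a b c d : Fin n, a < b ∧ c < d ∧ s = Equiv.swap a b ∧ t = Equiv.swap c d ∧
    (a < c ∨ (a = c ∧ b ≤ d))

/-- Isomorphism of flipclasses: a pair `(f, g)` where `f` is a flips-preserving bijection
on the underlying permutations (inducing a bijection of the path sets), and `g` is a
label-matching bijection of the label sets that is order preserving w.r.t. the
lexicographic orders. -/
def FlipclassIso (n m h : ℕ) (F : Set (ℕ → Pm n)) (F' : Set (ℕ → Pm m)) : Prop :=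
  ∃ f : Pm n → Pm m, ∃ g : Pm n → Pm m,
    Set.BijOn f (SV n h F) (SV m h F') ∧
    Set.BijOn (fun p => f ∘ p) F F' ∧
    (∀ p ∈ F, ∀ q ∈ F, ∀ i, FlipAt h i p q → FlipAt h i (f ∘ p) (f ∘ q)) ∧
    Set.BijOn g (labelSet n h F) (labelSet m h F') ∧
    (∀ p ∈ F, ∀ i, i < h → g (lab p i) = lab (f ∘ p) i) ∧
    (∀ s t, s ∈ labelSet n h F → t ∈ labelSet n h F → lexLe n s t → lexLe m (g s) (g t))

/-- `G(Γ)` is connected: any two letters moved by some label of the path `p` are joined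
by a chain of labels. -/
def IrredPath (n k : ℕ) (p : ℕ → Pm n) : Prop :=
  ∀ a b : Fin n, (∃ i, i < k ∧ lab p i a ≠ a) → (∃ i, i < k ∧ lab p i b ≠ b) →
    Relation.ReflTransGen (fun x y => ∃ i, i < k ∧ lab p i = Equiv.swap x y) a b

/-- The set of positions of the values in `E` in the one-line notation of `w`,
i.e. `w⁻¹(E)`. -/
def posSet {n : ℕ} (w : Pm n) (E : Finset (Fin n)) : Finset (Fin n) := E.image ⇑w.symm

lemma mem_posSet {n : ℕ} {w : Pm n} {E : Finset (Fin n)} {x : Fin n} :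
    x ∈ posSet w E ↔ w x ∈ E := by
  constructor
  · intro hx
    rcases Finset.mem_image.mp hx with ⟨y, hy, rfl⟩
    simpa using hy
  · intro hx
    exact Finset.mem_image.mpr ⟨w x, hx, by simp⟩

lemma posSet_card {n : ℕ} (w : Pm n) (E : Finset (Fin n)) : (posSet w E).card = E.card :=
  Finset.card_image_of_injective _ w.symm.injective

/-- The "pattern" map `r_E : 𝔖ₙ → 𝔖ₘ` (`|E| = m`): delete from the one-line notation of
`w` the values not in `E`, and renumber the values in `E` via the order preserving
bijection `E → [m]`. -/
noncomputable def rE (n m : ℕ) (E : Finset (Fin n)) (hm : E.card = m) (w : Pm n) : Pm m :=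
  (((posSet w E).orderIsoOfFin (by rw [posSet_card, hm])).toEquiv.trans
    (⟨fun x => ⟨w x.1, mem_posSet.mp x.2⟩,
      fun y => ⟨w.symm y.1, mem_posSet.mpr (by simp [y.2])⟩,
      fun x => Subtype.ext (by simp),
      fun y => Subtype.ext (by simp)⟩ :
        {x // x ∈ posSet w E} ≃ {y // y ∈ E})).trans (E.orderIsoOfFin hm).toEquiv.symm

/-- `r_E` applied to each vertex of a path. -/
noncomputable def rEPath (n m : ℕ) (E : Finset (Fin n)) (hm : E.card = m)
    (p : ℕ → Pm n) : ℕ → Pm m := fun j => rE n m E hm (p j)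

/-- The total order `⪯_{r_E}` induced on the transpositions of `𝔖ₘ` by a reflection
ordering of `𝔖ₙ` via the order preserving bijection `r_E⁻¹ : [m] → E`. -/
def inducedOrd (n m : ℕ) (ord : ReflOrder n) (E : Finset (Fin n)) (hm : E.card = m) :
    Pm m → Pm m → Prop := fun s t =>
  ∃ a b c d : Fin m, a < b ∧ c < d ∧ s = Equiv.swap a b ∧ t = Equiv.swap c d ∧
    ord.le (Equiv.swap (↑(E.orderIsoOfFin hm a)) (↑(E.orderIsoOfFin hm b)))
           (Equiv.swap (↑(E.orderIsoOfFin hm c)) (↑(E.orderIsoOfFin hm d)))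

/-- Isomorphism of (unlabelled, or labelled with determined labels) directed graphs. -/
def GraphIso {α β : Type*} (V1 : Set α) (E1 : α → α → Prop)
    (V2 : Set β) (E2 : β → β → Prop) : Prop :=
  ∃ φ : α → β, Set.BijOn φ V1 V2 ∧ ∀ x ∈ V1, ∀ y ∈ V1, (E1 x y ↔ E2 (φ x) (φ y))

/-- Vertices of the `k`-crown: `u`, `a₁,…,a_k`, `b₁,…,b_k`, `v`. -/
def CrownV (k : ℕ) : Type := (Unit ⊕ Fin k) ⊕ (Fin k ⊕ Unit)

/-- Edges of the `k`-crown: `u → aᵢ`, `aᵢ → bᵢ`, `a_{i+1} → bᵢ` (indices mod `k`),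
`bᵢ → v`. -/
def crownEdge (k : ℕ) : CrownV k → CrownV k → Prop
  | Sum.inl (Sum.inl _), Sum.inl (Sum.inr _) => True
  | Sum.inl (Sum.inr i), Sum.inr (Sum.inl j) => i.val = j.val ∨ i.val = (j.val + 1) % k
  | Sum.inr (Sum.inl _), Sum.inr (Sum.inr _) => True
  | _, _ => False

/-- The set `W₁ · W₂` (internal direct product when supports are disjoint). -/
def dprod {n : ℕ} (W1 W2 : Subgroup (Pm n)) : Set (Pm n) :=
  {w | ∃ w1 ∈ W1, ∃ w2 ∈ W2, w = w1 * w2}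

/-- A path in the subgraph of the Bruhat graph induced on the subset `X`. -/
def IsPathIn (n : ℕ) (X : Set (Pm n)) (h : ℕ) (u v : Pm n) (p : ℕ → Pm n) : Prop :=
  IsPath n h u v p ∧ ∀ j, p j ∈ X

/-- Flip step within the induced subgraph on `X`. -/
def FlipStepIn (n : ℕ) (X : Set (Pm n)) (h : ℕ) (u v : Pm n) (p q : ℕ → Pm n) : Prop :=
  IsPathIn n X h u v p ∧ IsPathIn n X h u v q ∧ ∃ i, FlipAt h i p q

/-- Flipclass of paths in the induced subgraph on `X`. -/
def IsFlipclassIn (n : ℕ) (X : Set (Pm n)) (h : ℕ) (u v : Pm n)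
    (F : Set (ℕ → Pm n)) : Prop :=
  ∃ p, IsPathIn n X h u v p ∧ F = {q | Relation.ReflTransGen (FlipStepIn n X h u v) p q}

/-- `Δ` (a path of length `k`, normalized) is the projection (deduplication) of the
vertexwise-projected sequence `s` (defined on `0,…,hh`). -/
def IsProj (n hh k : ℕ) (s Δ : ℕ → Pm n) : Prop :=
  ∃ φ : ℕ → ℕ, Monotone φ ∧ φ 0 = 0 ∧ (∀ j, hh ≤ j → φ j = k) ∧
    (∀ j, j < hh →
      (s (j + 1) = s j ∧ φ (j + 1) = φ j) ∨ (s (j + 1) ≠ s j ∧ φ (j + 1) = φ j + 1)) ∧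
    (∀ j, j ≤ hh → s j = Δ (φ j)) ∧ ∀ j, k ≤ j → Δ j = Δ k


section FourFlipclassProof

open Equiv in
lemma len_lt_swap_mul {n : ℕ} (w : Pm n) (i j : Fin n) (hij : i < j)
    (hab : w⁻¹ i < w⁻¹ j) : len w < len (Equiv.swap i j * w) := by
  classical
  set a := w⁻¹ i with ha
  set b := w⁻¹ j with hb
  have hwa : w a = i := by simp [ha]
  have hwb : w b = j := by simp [hb]
  set σ := Equiv.swap i j * w with hσdef
  set ψ := Equiv.swap a b with hψdef
  have hσ : ∀ x, σ x = w (ψ x) := by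
    intro x
    by_cases hxa : x = a
    · subst hxa; simp [hσdef, hψdef, hwa, hwb]
    by_cases hxb : x = b
    · subst hxb; simp [hσdef, hψdef, hwa, hwb]
    · have h1 : ψ x = x := Equiv.swap_apply_of_ne_of_ne hxa hxb
      have h2 : w x ≠ i := fun h => hxa (by rw [← hwa] at h; exact w.injective h)
      have h3 : w x ≠ j := fun h => hxb (by rw [← hwb] at h; exact w.injective h)
      simp [hσdef, h1, Equiv.swap_apply_of_ne_of_ne h2 h3]
  have hψψ : ∀ x, ψ (ψ x) = x := fun x => Equiv.swap_apply_self _ _ _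
  set S : Pm n → Finset (Fin n × Fin n) := fun g =>
    Finset.univ.filter fun q : Fin n × Fin n => q.1 < q.2 ∧ g q.2 < g q.1 with hS
  have hlen : ∀ g : Pm n, len g = (S g).card := fun g => rfl
  set f : Fin n × Fin n → Fin n × Fin n := fun q =>
    if ψ q.1 < ψ q.2 then (ψ q.1, ψ q.2) else q with hf
  have hanb : a ≠ b := by
    intro h; rw [ha, hb] at h; exact (ne_of_lt hij) (w.symm.injective h)
  have hmaps : ∀ q ∈ S w, f q ∈ S σ ∧ f q ≠ (a, b) := by
    intro q hq
    simp only [hS, Finset.mem_filter, Finset.mem_univ, true_and] at hq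
    obtain ⟨hq1, hq2⟩ := hq
    by_cases hψq : ψ q.1 < ψ q.2
    · constructor
      · simp only [hf, if_pos hψq, hS, Finset.mem_filter, Finset.mem_univ, true_and]
        refine ⟨hψq, ?_⟩
        rw [hσ, hσ, hψψ, hψψ]; exact hq2
      · simp only [hf, if_pos hψq]
        intro h
        have h1 : ψ q.1 = a := congrArg Prod.fst h
        have h2 : ψ q.2 = b := congrArg Prod.snd h
        have e1 : q.1 = b := by rw [← hψψ q.1, h1]; simp [hψdef]
        have e2 : q.2 = a := by rw [← hψψ q.2, h2]; simp [hψdef]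
        rw [e1, e2] at hq1; exact absurd (hab.trans hq1) (lt_irrefl _)
    · constructor
      · simp only [hf, if_neg hψq, hS, Finset.mem_filter, Finset.mem_univ, true_and]
        refine ⟨hq1, ?_⟩
        rw [hσ, hσ]
        -- case analysis
        by_cases h1a : q.1 = a
        · by_cases h2b : q.2 = b
          · exfalso
            rw [h1a, h2b, hwa, hwb] at hq2
            exact absurd (hq2.trans hij) (lt_irrefl _)
          · have h2a : q.2 ≠ a := by rw [h1a] at hq1; exact (ne_of_gt hq1)
            have hψ2 : ψ q.2 = q.2 := Equiv.swap_apply_of_ne_of_ne h2a h2b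
            have hψ1 : ψ q.1 = b := by rw [h1a]; simp [hψdef]
            rw [hψ1, hψ2, hwb]
            rw [h1a, hwa] at hq2
            exact hq2.trans hij
        by_cases h1b : q.1 = b
        · exfalso
          have h2a : q.2 ≠ a := fun h => by
            rw [h1b, h] at hq1; exact absurd (hab.trans hq1) (lt_irrefl _)
          have h2b : q.2 ≠ b := by rw [h1b] at hq1; exact (ne_of_gt hq1)
          have hψ2 : ψ q.2 = q.2 := Equiv.swap_apply_of_ne_of_ne h2a h2b
          have hψ1 : ψ q.1 = a := by rw [h1b]; simp [hψdef]
          apply hψq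
          rw [hψ1, hψ2]
          rw [h1b] at hq1
          exact lt_trans hab hq1
        · have hψ1 : ψ q.1 = q.1 := Equiv.swap_apply_of_ne_of_ne h1a h1b
          by_cases h2a : q.2 = a
          · exfalso
            have hψ2 : ψ q.2 = b := by rw [h2a]; simp [hψdef]
            apply hψq
            rw [hψ1, hψ2]
            rw [h2a] at hq1
            exact lt_trans hq1 hab
          by_cases h2b : q.2 = b
          · have hψ2 : ψ q.2 = a := by rw [h2b]; simp [hψdef]
            rw [hψ1, hψ2, hwa]
            rw [h2b, hwb] at hq2
            exact lt_trans hij hq2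
          · exfalso
            have hψ2 : ψ q.2 = q.2 := Equiv.swap_apply_of_ne_of_ne h2a h2b
            apply hψq
            rw [hψ1, hψ2]
            exact hq1
      · simp only [hf, if_neg hψq]
        intro h
        rw [h] at hq2
        simp only at hq2
        rw [hwa, hwb] at hq2
        exact absurd (hq2.trans hij) (lt_irrefl _)
  have hinj : Set.InjOn f (S w) := by
    intro q hq q' hq' heq
    simp only [hS, Finset.coe_filter, Set.mem_setOf_eq, Finset.mem_univ, true_and] at hq hq'
    by_cases h1 : ψ q.1 < ψ q.2 <;> by_cases h2 : ψ q'.1 < ψ q'.2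
    · simp only [hf, if_pos h1, if_pos h2] at heq
      have e1 : ψ q.1 = ψ q'.1 := congrArg Prod.fst heq
      have e2 : ψ q.2 = ψ q'.2 := congrArg Prod.snd heq
      exact Prod.ext (ψ.injective e1) (ψ.injective e2)
    · simp only [hf, if_pos h1, if_neg h2] at heq
      exfalso
      have e1 : ψ q.1 = q'.1 := congrArg Prod.fst heq
      have e2 : ψ q.2 = q'.2 := congrArg Prod.snd heq
      rw [← e1, ← e2, hψψ, hψψ] at h2
      exact h2 hq.1
    · simp only [hf, if_neg h1, if_pos h2] at heq
      exfalso
      have e1 : q.1 = ψ q'.1 := congrArg Prod.fst heq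
      have e2 : q.2 = ψ q'.2 := congrArg Prod.snd heq
      rw [e1, e2] at h1
      rw [hψψ, hψψ] at h1
      exact h1 hq'.1
    · simp only [hf, if_neg h1, if_neg h2] at heq
      exact heq
  have habS : (a, b) ∈ S σ := by
    simp only [hS, Finset.mem_filter, Finset.mem_univ, true_and]
    refine ⟨hab, ?_⟩
    have e1 : σ a = j := by rw [hσ]; simp [hψdef, hwb]
    have e2 : σ b = i := by rw [hσ]; simp [hψdef, hwa]
    simp only [e1, e2]; exact hij
  have hsub : (S w).image f ⊆ (S σ).erase (a, b) := by
    intro x hx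
    obtain ⟨q, hq, rfl⟩ := Finset.mem_image.mp hx
    obtain ⟨h1, h2⟩ := hmaps q hq
    exact Finset.mem_erase.mpr ⟨h2, h1⟩
  calc len w = ((S w).image f).card := by
        rw [hlen, Finset.card_image_of_injOn hinj]
    _ ≤ ((S σ).erase (a, b)).card := Finset.card_le_card hsub
    _ < (S σ).card := Finset.card_erase_lt_of_mem habS
    _ = len σ := (hlen σ).symm

lemma edge_ascent {n : ℕ} {w w' : Pm n} (hE : BEdge w w') {i j : Fin n}
    (hrep : w' * w⁻¹ = Equiv.swap i j) (hij : i < j) : w⁻¹ i < w⁻¹ j := by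
  have hw' : w' = Equiv.swap i j * w := by
    rw [← hrep]; group
  rcases lt_trichotomy (w⁻¹ i) (w⁻¹ j) with h | h | h
  · exact h
  · exact absurd (w.symm.injective h) (ne_of_lt hij)
  · exfalso
    have h2 : (Equiv.swap i j * w)⁻¹ i < (Equiv.swap i j * w)⁻¹ j := by
      simp only [mul_inv_rev, Equiv.swap_inv, Equiv.Perm.mul_apply]
      simp only [Equiv.swap_apply_left, Equiv.swap_apply_right]
      exact h
    have h3 := len_lt_swap_mul (Equiv.swap i j * w) i j hij h2
    rw [← mul_assoc, Equiv.swap_mul_self, one_mul] at h3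
    rw [hw'] at hE
    exact absurd (hE.2.trans h3) (lt_irrefl _)

lemma moved_of_swap {n : ℕ} {u1 u2 x y : Fin n} (h : Equiv.swap u1 u2 x = y) (hxy : x ≠ y) :
    x = u1 ∨ x = u2 := by
  by_contra hc
  push_neg at hc
  rw [Equiv.swap_apply_of_ne_of_ne hc.1 hc.2] at h
  exact hxy h

lemma swap_pair_eq {n : ℕ} {u1 u2 x y : Fin n} (h : Equiv.swap u1 u2 x = y) (hxy : x ≠ y) :
    (x = u1 ∧ y = u2) ∨ (x = u2 ∧ y = u1) := by
  rcases moved_of_swap h hxy with rfl | rfl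
  · left; exact ⟨rfl, by rw [← h, Equiv.swap_apply_left]⟩
  · right; exact ⟨rfl, by rw [← h, Equiv.swap_apply_right]⟩

lemma three_moved {n : ℕ} {b : Pm n} (hb : b.IsSwap) {x y z : Fin n}
    (hxy : x ≠ y) (hxz : x ≠ z) (hyz : y ≠ z)
    (hx : b x ≠ x) (hy : b y ≠ y) (hz : b z ≠ z) : False := by
  obtain ⟨u1, u2, hu, rfl⟩ := hb
  have Hx := moved_of_swap rfl hx.symm |>.symm
  have hx' : x = u1 ∨ x = u2 := by
    by_contra hc; push_neg at hc
    exact hx (Equiv.swap_apply_of_ne_of_ne hc.1 hc.2)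
  have hy' : y = u1 ∨ y = u2 := by
    by_contra hc; push_neg at hc
    exact hy (Equiv.swap_apply_of_ne_of_ne hc.1 hc.2)
  have hz' : z = u1 ∨ z = u2 := by
    by_contra hc; push_neg at hc
    exact hz (Equiv.swap_apply_of_ne_of_ne hc.1 hc.2)
  rcases hx' with rfl | rfl <;> rcases hy' with rfl | rfl <;> rcases hz' with rfl | rfl <;>
    simp_all

lemma swap_apply_ne_ne {n : ℕ} {c d x : Fin n} (h1 : x ≠ c) (h2 : x ≠ d) :
    Equiv.swap c d x = x := Equiv.swap_apply_of_ne_of_ne h1 h2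

lemma swap_disjoint_comm {n : ℕ} {p q r s : Fin n}
    (hpr : p ≠ r) (hps : p ≠ s) (hqr : q ≠ r) (hqs : q ≠ s) :
    Equiv.swap p q * Equiv.swap r s = Equiv.swap r s * Equiv.swap p q := by
  ext x
  simp only [Equiv.Perm.mul_apply]
  by_cases hx1 : x = p
  · rw [hx1, swap_apply_ne_ne hpr hps, Equiv.swap_apply_left, swap_apply_ne_ne hqr hqs]
  by_cases hx2 : x = q
  · rw [hx2, swap_apply_ne_ne hqr hqs, Equiv.swap_apply_right, swap_apply_ne_ne hpr hps]
  by_cases hx3 : x = r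
  · subst hx3
    simp [Equiv.swap_apply_left, swap_apply_ne_ne hps.symm hqs.symm,
      swap_apply_ne_ne hpr.symm hqr.symm]
  by_cases hx4 : x = s
  · subst hx4
    simp [Equiv.swap_apply_right, swap_apply_ne_ne hps.symm hqs.symm,
      swap_apply_ne_ne hpr.symm hqr.symm]
  · rw [swap_apply_ne_ne hx3 hx4, swap_apply_ne_ne hx1 hx2, swap_apply_ne_ne hx3 hx4]

/-- Unique factorization of a product of two disjoint transpositions. -/
lemma swap_factor_disjoint {n : ℕ} {p q r s : Fin n}
    (hpq : p ≠ q) (hrs : r ≠ s) (hpr : p ≠ r) (hps : p ≠ s) (hqr : q ≠ r) (hqs : q ≠ s)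
    {a b : Pm n} (ha : a.IsSwap) (hb : b.IsSwap)
    (heq : a * b = Equiv.swap p q * Equiv.swap r s) :
    (a = Equiv.swap p q ∧ b = Equiv.swap r s) ∨
    (a = Equiv.swap r s ∧ b = Equiv.swap p q) := by
  set g : Pm n := Equiv.swap p q * Equiv.swap r s with hg
  have hgp : g p = q := by simp [hg, swap_apply_ne_ne hpr hps]
  have hgq : g q = p := by simp [hg, swap_apply_ne_ne hqr hqs]
  have hgr : g r = s := by simp [hg, swap_apply_ne_ne hps.symm hqs.symm]
  have hgs : g s = r := by simp [hg, swap_apply_ne_ne hpr.symm hqr.symm]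
  obtain ⟨m1, m2, hm, ham⟩ := ha
  have ha2 : Equiv.swap m1 m2 * Equiv.swap m1 m2 = 1 := Equiv.swap_mul_self _ _
  have hbeq : b = a * g := by rw [← heq, ← mul_assoc, ham, ha2, one_mul]
  have hbx : ∀ x, b x = a (g x) := by intro x; rw [hbeq]; rfl
  have ha_ev : ∀ x, x ≠ m1 → x ≠ m2 → a x = x := by
    intro x h1 h2; rw [ham]; exact swap_apply_ne_ne h1 h2
  have ham1 : a m1 = m2 := by rw [ham]; exact Equiv.swap_apply_left _ _
  have ham2 : a m2 = m1 := by rw [ham]; exact Equiv.swap_apply_right _ _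
  have hcom' : Equiv.swap p q * Equiv.swap r s = Equiv.swap r s * Equiv.swap p q :=
    swap_disjoint_comm hpr hps hqr hqs
  -- main : if one point inside and the other outside, contradiction
  have main : ∀ m1' m2' : Fin n, m1' ≠ m2' → a = Equiv.swap m1' m2' →
      ¬(m2' = p ∨ m2' = q ∨ m2' = r ∨ m2' = s) →
      (m1' = p ∨ m1' = q ∨ m1' = r ∨ m1' = s) → False := by
    intro m1' m2' hm' ham' hm2 hm1
    push_neg at hm2
    obtain ⟨h2p, h2q, h2r, h2s⟩ := hm2
    have ha_ev' : ∀ x, x ≠ m1' → x ≠ m2' → a x = x := by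
      intro x h1 h2; rw [ham']; exact swap_apply_ne_ne h1 h2
    have ham1' : a m1' = m2' := by rw [ham']; exact Equiv.swap_apply_left _ _
    rcases hm1 with rfl | rfl | rfl | rfl
    · exact three_moved hb hqr hqs hrs
        (by rw [hbx, hgq, ham1']; exact h2q)
        (by rw [hbx, hgr, ha_ev' s (fun h => hps h.symm) (fun h => h2s h.symm)]; exact hrs.symm)
        (by rw [hbx, hgs, ha_ev' r (fun h => hpr h.symm) (fun h => h2r h.symm)]; exact hrs)
    · exact three_moved hb (fun h => hpr h) hps hrs
        (by rw [hbx, hgp, ham1']; exact h2p)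
        (by rw [hbx, hgr, ha_ev' s (fun h => hqs h.symm) (fun h => h2s h.symm)]; exact hrs.symm)
        (by rw [hbx, hgs, ha_ev' r (fun h => hqr h.symm) (fun h => h2r h.symm)]; exact hrs)
    · exact three_moved hb hpq hps hqs
        (by rw [hbx, hgp, ha_ev' q (fun h => hqr h) (fun h => h2q h.symm)]; exact hpq.symm)
        (by rw [hbx, hgq, ha_ev' p (fun h => hpr h) (fun h => h2p h.symm)]; exact hpq)
        (by rw [hbx, hgs, ham1']; exact h2s)
    · exact three_moved hb hpq hpr hqr
        (by rw [hbx, hgp, ha_ev' q (fun h => hqs h) (fun h => h2q h.symm)]; exact hpq.symm)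
        (by rw [hbx, hgq, ha_ev' p (fun h => hps h) (fun h => h2p h.symm)]; exact hpq)
        (by rw [hbx, hgr, ham1']; exact h2r)
  have bothout : ¬(m1 = p ∨ m1 = q ∨ m1 = r ∨ m1 = s) →
      ¬(m2 = p ∨ m2 = q ∨ m2 = r ∨ m2 = s) → False := by
    intro h1 h2
    push_neg at h1 h2
    obtain ⟨h1p, h1q, h1r, h1s⟩ := h1
    obtain ⟨h2p, h2q, h2r, h2s⟩ := h2
    exact three_moved hb hpq hpr hqr
      (by rw [hbx, hgp, ha_ev q (fun h => h1q h.symm) (fun h => h2q h.symm)]; exact hpq.symm)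
      (by rw [hbx, hgq, ha_ev p (fun h => h1p h.symm) (fun h => h2p h.symm)]; exact hpq)
      (by rw [hbx, hgr, ha_ev s (fun h => h1s h.symm) (fun h => h2s h.symm)]; exact hrs.symm)
  have hamm : a = Equiv.swap m2 m1 := by rw [ham]; exact Equiv.swap_comm _ _
  by_cases hA : m1 = p ∨ m1 = q ∨ m1 = r ∨ m1 = s
  case neg =>
    by_cases hB : m2 = p ∨ m2 = q ∨ m2 = r ∨ m2 = s
    · exact absurd (main m2 m1 hm.symm hamm hA hB) id
    · exact absurd (bothout hA hB) id
  by_cases hB : m2 = p ∨ m2 = q ∨ m2 = r ∨ m2 = s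
  case neg => exact absurd (main m1 m2 hm ham hB hA) id
  -- both inside
  have hcomm : ∀ x, a (g x) = g (a x) := by
    have hb2 : b * b = 1 := by
      obtain ⟨u1, u2, hu, hbu⟩ := hb; rw [hbu]; exact Equiv.swap_mul_self _ _
    have h1 : (a * g) * (a * g) = 1 := by rw [← hbeq]; exact hb2
    have hg2 : g * g = 1 := by
      rw [hg, mul_assoc, ← mul_assoc (Equiv.swap r s), ← hcom', mul_assoc,
        Equiv.swap_mul_self, mul_one, Equiv.swap_mul_self]
    have hainv : a⁻¹ = a := by rw [ham, Equiv.swap_inv]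
    have hginv : g⁻¹ = g := by rw [eq_comm, eq_inv_iff_mul_eq_one]; exact hg2
    have hcc : a * g = g * a := by
      have e1 : a * g = (a * g)⁻¹ := by rw [eq_comm, inv_eq_iff_mul_eq_one]; exact h1
      rw [e1, mul_inv_rev, hainv, hginv]
    intro x
    calc a (g x) = (a * g) x := rfl
      _ = (g * a) x := by rw [hcc]
      _ = g (a x) := rfl
  have mixed : ∀ m1' m2', m1' ≠ m2' → a = Equiv.swap m1' m2' → a m1' = m2' →
      (m1' = p ∨ m1' = q) → (m2' = r ∨ m2' = s) → False := by
    intro m1' m2' hm' ham' ham1' h1 h2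
    have key := hcomm m1'
    rw [ham1'] at key
    rcases h1 with rfl | rfl <;> rcases h2 with rfl | rfl
    · rw [hgp, hgr, ham', swap_apply_ne_ne hpq.symm hqr] at key; exact hqs key
    · rw [hgp, hgs, ham', swap_apply_ne_ne hpq.symm hqs] at key; exact hqr key
    · rw [hgq, hgr, ham', swap_apply_ne_ne hpq hpr] at key; exact hps key
    · rw [hgq, hgs, ham', swap_apply_ne_ne hpq hps] at key; exact hpr key
  have mixed2 : ∀ m1' m2', m1' ≠ m2' → a = Equiv.swap m1' m2' → a m1' = m2' →
      (m1' = r ∨ m1' = s) → (m2' = p ∨ m2' = q) → False := by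
    intro m1' m2' hm' ham' ham1' h1 h2
    have key := hcomm m1'
    rw [ham1'] at key
    rcases h1 with rfl | rfl <;> rcases h2 with rfl | rfl
    · rw [hgr, hgp, ham', swap_apply_ne_ne hrs.symm hps.symm] at key; exact hqs (key.symm)
    · rw [hgr, hgq, ham', swap_apply_ne_ne hrs.symm hqs.symm] at key; exact hps (key.symm)
    · rw [hgs, hgp, ham', swap_apply_ne_ne hrs hpr.symm] at key; exact hqr (key.symm)
    · rw [hgs, hgq, ham', swap_apply_ne_ne hrs hqr.symm] at key; exact hpr (key.symm)
  rcases hA with h1 | h1 | h1 | h1 <;> rcases hB with h2 | h2 | h2 | h2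
  · exact absurd (h1.trans h2.symm) hm
  · -- a = swap p q
    left
    refine ⟨by rw [ham, h1, h2], ?_⟩
    rw [hbeq, ham, h1, h2, hg, ← mul_assoc, Equiv.swap_mul_self, one_mul]
  · exact absurd (mixed m1 m2 hm ham ham1 (Or.inl h1) (Or.inl h2)) id
  · exact absurd (mixed m1 m2 hm ham ham1 (Or.inl h1) (Or.inr h2)) id
  · -- m1 = q, m2 = p
    left
    have haeq : a = Equiv.swap p q := by rw [hamm, h1, h2]
    refine ⟨haeq, ?_⟩
    rw [hbeq, haeq, hg, ← mul_assoc, Equiv.swap_mul_self, one_mul]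
  · exact absurd (h1.trans h2.symm) hm
  · exact absurd (mixed m1 m2 hm ham ham1 (Or.inr h1) (Or.inl h2)) id
  · exact absurd (mixed m1 m2 hm ham ham1 (Or.inr h1) (Or.inr h2)) id
  · exact absurd (mixed2 m1 m2 hm ham ham1 (Or.inl h1) (Or.inl h2)) id
  · exact absurd (mixed2 m1 m2 hm ham ham1 (Or.inl h1) (Or.inr h2)) id
  · exact absurd (h1.trans h2.symm) hm
  · -- a = swap r s
    right
    have haeq : a = Equiv.swap r s := by rw [ham, h1, h2]
    refine ⟨haeq, ?_⟩
    rw [hbeq, haeq, hg, hcom', ← mul_assoc, Equiv.swap_mul_self, one_mul]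
  · exact absurd (mixed2 m1 m2 hm ham ham1 (Or.inr h1) (Or.inl h2)) id
  · exact absurd (mixed2 m1 m2 hm ham ham1 (Or.inr h1) (Or.inr h2)) id
  · -- m1 = s, m2 = r
    right
    have haeq : a = Equiv.swap r s := by rw [hamm, h1, h2]
    refine ⟨haeq, ?_⟩
    rw [hbeq, haeq, hg, hcom', ← mul_assoc, Equiv.swap_mul_self, one_mul]
  · exact absurd (h1.trans h2.symm) hm

/-- membership in a triple -/
def Mem3 {n : ℕ} (X Y Z e : Fin n) : Prop := e = X ∨ e = Y ∨ e = Z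

/-- a transposition supported inside a triple -/
def SwapIn3 {n : ℕ} (X Y Z : Fin n) (σ : Pm n) : Prop :=
  ∃ c d, c ≠ d ∧ Mem3 X Y Z c ∧ Mem3 X Y Z d ∧ σ = Equiv.swap c d

/-- Factorization of a 3-cycle into two transpositions stays in the triple. -/
lemma swap_factor_triple {n : ℕ} {X Y Z : Fin n}
    (hXY : X ≠ Y) (hYZ : Y ≠ Z) (hXZ : X ≠ Z)
    {a b : Pm n} (ha : a.IsSwap) (hb : b.IsSwap)
    (heq : a * b = Equiv.swap Y Z * Equiv.swap X Y) :
    SwapIn3 X Y Z a ∧ SwapIn3 X Y Z b := by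
  set ρ : Pm n := Equiv.swap Y Z * Equiv.swap X Y with hρ
  have hρX : ρ X = Z := by simp [hρ]
  have hρY : ρ Y = X := by simp [hρ, swap_apply_ne_ne hXY hXZ]
  have hρZ : ρ Z = Y := by simp [hρ, swap_apply_ne_ne hXZ.symm hYZ.symm]
  have hρ_ev : ∀ x, x ≠ X → x ≠ Y → x ≠ Z → ρ x = x := by
    intro x h1 h2 h3
    simp [hρ, swap_apply_ne_ne h1 h2, swap_apply_ne_ne h2 h3]
  obtain ⟨m1, m2, hm, ham⟩ := ha
  have hbeq : b = a * ρ := by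
    rw [← heq, ← mul_assoc, ham, Equiv.swap_mul_self, one_mul]
  have hbx : ∀ x, b x = a (ρ x) := by intro x; rw [hbeq]; rfl
  have ha_ev : ∀ x, x ≠ m1 → x ≠ m2 → a x = x := by
    intro x h1 h2; rw [ham]; exact swap_apply_ne_ne h1 h2
  -- generic: one endpoint inside the triple, other outside
  have generic : ∀ m1' m2' B C : Fin n, a = Equiv.swap m1' m2' →
      ρ m1' = C → ρ C = B → ρ B = m1' → ρ m2' = m2' →
      m1' ≠ m2' → m1' ≠ B → m1' ≠ C → B ≠ C → m2' ≠ B → m2' ≠ C → False := by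
    intro m1' m2' B C ham' e1 e2 e3 efix hm' h1B h1C hBC h2B h2C
    have ha_ev' : ∀ x, x ≠ m1' → x ≠ m2' → a x = x := by
      intro x hh1 hh2; rw [ham']; exact swap_apply_ne_ne hh1 hh2
    refine three_moved hb h2B h2C hBC ?_ ?_ ?_
    · rw [hbx, efix, ham', Equiv.swap_apply_right]; exact hm'
    · rw [hbx, e3, ham', Equiv.swap_apply_left]; exact h2B
    · rw [hbx, e2, ha_ev' B h1B.symm h2B.symm]; exact hBC
  have inner : ∀ m1' m2', m1' ≠ m2' → a = Equiv.swap m1' m2' →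
      ¬Mem3 X Y Z m2' → Mem3 X Y Z m1' → False := by
    intro m1' m2' hm' ham' h2 h1
    obtain ⟨h2X, h2Y, h2Z⟩ : m2' ≠ X ∧ m2' ≠ Y ∧ m2' ≠ Z := by
      refine ⟨?_, ?_, ?_⟩ <;> intro h <;> exact h2 (by rw [h]; simp [Mem3])
    have hfix : ρ m2' = m2' := hρ_ev m2' h2X h2Y h2Z
    rcases h1 with h | h | h
    · exact generic m1' m2' Y Z ham' (by rw [h]; exact hρX) hρZ
        (by rw [h] at *; exact hρY) hfix hm' (by rw [h]; exact hXY) (by rw [h]; exact hXZ)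
        hYZ h2Y h2Z
    · exact generic m1' m2' Z X ham' (by rw [h]; exact hρY) hρX
        (by rw [h] at *; exact hρZ) hfix hm' (by rw [h]; exact hYZ)
        (by rw [h]; exact hXY.symm) (fun hh => hXZ hh.symm) h2Z h2X
    · exact generic m1' m2' X Y ham' (by rw [h]; exact hρZ) hρY
        (by rw [h] at *; exact hρX) hfix hm' (by rw [h]; exact hXZ.symm)
        (by rw [h]; exact hYZ.symm) hXY h2X h2Y
  have bothout : ¬Mem3 X Y Z m1 → ¬Mem3 X Y Z m2 → False := by
    intro h1 h2
    obtain ⟨h1X, h1Y, h1Z⟩ : m1 ≠ X ∧ m1 ≠ Y ∧ m1 ≠ Z := by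
      refine ⟨?_, ?_, ?_⟩ <;> intro h <;> exact h1 (by rw [h]; simp [Mem3])
    obtain ⟨h2X, h2Y, h2Z⟩ : m2 ≠ X ∧ m2 ≠ Y ∧ m2 ≠ Z := by
      refine ⟨?_, ?_, ?_⟩ <;> intro h <;> exact h2 (by rw [h]; simp [Mem3])
    exact three_moved hb hXY hXZ hYZ
      (by rw [hbx, hρX, ha_ev Z h1Z.symm h2Z.symm]; exact hXZ.symm)
      (by rw [hbx, hρY, ha_ev X h1X.symm h2X.symm]; exact hXY)
      (by rw [hbx, hρZ, ha_ev Y h1Y.symm h2Y.symm]; exact hYZ)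
  have hamm : a = Equiv.swap m2 m1 := by rw [ham]; exact Equiv.swap_comm _ _
  have hmem : Mem3 X Y Z m1 ∧ Mem3 X Y Z m2 := by
    by_cases hA : Mem3 X Y Z m1
    · by_cases hB : Mem3 X Y Z m2
      · exact ⟨hA, hB⟩
      · exact absurd (inner m1 m2 hm ham hB hA) id
    · by_cases hB : Mem3 X Y Z m2
      · exact absurd (inner m2 m1 hm.symm hamm hA hB) id
      · exact absurd (bothout hA hB) id
  constructor
  · exact ⟨m1, m2, hm, hmem.1, hmem.2, ham⟩
  · -- b's endpoints also in the triple
    obtain ⟨u1, u2, hu, hbu⟩ := hb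
    have hmoves : ∀ w : Fin n, b w ≠ w → Mem3 X Y Z w := by
      intro w hw
      by_contra hc
      obtain ⟨hwX, hwY, hwZ⟩ : w ≠ X ∧ w ≠ Y ∧ w ≠ Z := by
        refine ⟨?_, ?_, ?_⟩ <;> intro h <;> exact hc (by rw [h]; simp [Mem3])
      apply hw
      rw [hbx, hρ_ev w hwX hwY hwZ]
      apply ha_ev
      · intro h; rw [h] at hc; exact hc hmem.1
      · intro h; rw [h] at hc; exact hc hmem.2
    refine ⟨u1, u2, hu, ?_, ?_, hbu⟩
    · exact hmoves u1 (by rw [hbu, Equiv.swap_apply_left]; exact hu.symm)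
    · exact hmoves u2 (by rw [hbu, Equiv.swap_apply_right]; exact hu)

section PathFacts
variable {n : ℕ} {u v : Pm n}

lemma mem_flipclass_isPath {F : Set (ℕ → Pm n)} (hF : IsFlipclass n 4 u v F)
    {p : ℕ → Pm n} (hp : p ∈ F) : IsPath n 4 u v p := by
  obtain ⟨p₀, hp₀, hFeq⟩ := hF
  rw [hFeq] at hp
  induction hp with
  | refl => exact hp₀
  | tail _ h ih => exact h.2.1

lemma path_len_lt {p : ℕ → Pm n} (hp : IsPath n 4 u v p) {i j : ℕ} (hij : i < j)
    (hj : j ≤ 4) : len (p i) < len (p j) := by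
  induction j with
  | zero => omega
  | succ k ih =>
    have hk : k < 4 := by omega
    have hedge := (hp.2.2 k hk).2
    rcases Nat.lt_or_ge i k with h | h
    · exact (ih h (by omega)).trans hedge
    · have : i = k := by omega
      rw [this]; exact hedge

lemma path_ne {p : ℕ → Pm n} (hp : IsPath n 4 u v p) {i j : ℕ} (hij : i < j)
    (hj : j ≤ 4) : p i ≠ p j := by
  intro h
  have := path_len_lt hp hij hj
  rw [h] at this
  exact absurd this (lt_irrefl _)

lemma path_sign {p : ℕ → Pm n} (hp : IsPath n 4 u v p) :
    ∀ i, i ≤ 4 → Equiv.Perm.sign (p i) = (-1) ^ i * Equiv.Perm.sign (p 0) := by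
  intro i hi
  induction i with
  | zero => simp
  | succ k ih =>
    have hk : k < 4 := by omega
    have hedge := hp.2.2 k hk
    obtain ⟨a, b, hab, hswap⟩ := hedge.1
    have hrec : p (k + 1) = Equiv.swap a b * p k := by
      rw [← hswap]; group
    rw [hrec, map_mul, Equiv.Perm.sign_swap hab, ih (by omega), pow_succ]
    rw [← mul_assoc, mul_comm ((-1 : ℤˣ) ^ k) (-1 : ℤˣ)]

lemma lab_isSwap {p : ℕ → Pm n} (hp : IsPath n 4 u v p) {k : ℕ} (hk : k < 4) :
    (lab p k).IsSwap := (hp.2.2 k hk).1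

lemma lab_mul {p : ℕ → Pm n} (k : ℕ) : lab p k * p k = p (k + 1) := by
  simp [lab, mul_assoc]

lemma consec_lab_ne {p : ℕ → Pm n} (hp : IsPath n 4 u v p) {k : ℕ} (hk : k + 1 < 4) :
    lab p k ≠ lab p (k + 1) := by
  intro h
  have h1 : p (k + 2) = lab p (k + 1) * p (k + 1) := (lab_mul (k + 1)).symm
  have h2 : p (k + 1) = lab p k * p k := (lab_mul k).symm
  obtain ⟨a, b, hab, hswap⟩ := lab_isSwap hp (show k < 4 by omega)
  have : p (k + 2) = p k := by
    rw [h1, ← h, h2, ← mul_assoc, hswap, Equiv.swap_mul_self, one_mul]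
  exact path_ne hp (show k < k + 2 by omega) (by omega) this.symm

end PathFacts

noncomputable def invT {n : ℕ} (X Y Z : Fin n) (w : Pm n) : ℕ :=
  (if w⁻¹ Y < w⁻¹ X then 1 else 0) + (if w⁻¹ Z < w⁻¹ X then 1 else 0) +
  (if w⁻¹ Z < w⁻¹ Y then 1 else 0)

lemma invT_le_three {n : ℕ} (X Y Z : Fin n) (w : Pm n) : invT X Y Z w ≤ 3 := by
  unfold invT; split_ifs <;> omega

lemma swapIn3_perm {n : ℕ} {X Y Z X' Y' Z' : Fin n}
    (h : ∀ e, Mem3 X Y Z e → Mem3 X' Y' Z' e) {σ : Pm n} :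
    SwapIn3 X Y Z σ → SwapIn3 X' Y' Z' σ := by
  rintro ⟨c, d, hcd, hc, hd, hrep⟩
  exact ⟨c, d, hcd, h c hc, h d hd, hrep⟩

lemma invT_step {n : ℕ} {X Y Z : Fin n} (hXY : X < Y) (hYZ : Y < Z)
    {w w' : Pm n} (hE : BEdge w w') (hsw : SwapIn3 X Y Z (w' * w⁻¹)) :
    invT X Y Z w + 1 ≤ invT X Y Z w' := by
  obtain ⟨c, d, hcd, hc, hd, hrep⟩ := hsw
  have hpair : (w' * w⁻¹ = Equiv.swap X Y) ∨ (w' * w⁻¹ = Equiv.swap X Z) ∨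
      (w' * w⁻¹ = Equiv.swap Y Z) := by
    rcases hc with rfl | rfl | rfl <;> rcases hd with rfl | rfl | rfl
    · exact absurd rfl hcd
    · exact Or.inl hrep
    · exact Or.inr (Or.inl hrep)
    · exact Or.inl (hrep.trans (Equiv.swap_comm _ _))
    · exact absurd rfl hcd
    · exact Or.inr (Or.inr hrep)
    · exact Or.inr (Or.inl (hrep.trans (Equiv.swap_comm _ _)))
    · exact Or.inr (Or.inr (hrep.trans (Equiv.swap_comm _ _)))
    · exact absurd rfl hcd
  have hXZ : X < Z := hXY.trans hYZ
  rcases hpair with h | h | h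
  · have hasc : w⁻¹ X < w⁻¹ Y := edge_ascent hE h hXY
    have hw' : w'⁻¹ = w⁻¹ * Equiv.swap X Y := by
      have : w' = Equiv.swap X Y * w := by rw [← h]; group
      rw [this, mul_inv_rev, Equiv.swap_inv]
    have e1 : w'⁻¹ X = w⁻¹ Y := by rw [hw']; simp
    have e2 : w'⁻¹ Y = w⁻¹ X := by rw [hw']; simp
    have e3 : w'⁻¹ Z = w⁻¹ Z := by
      rw [hw']; simp only [Equiv.Perm.mul_apply]
      rw [swap_apply_ne_ne (ne_of_gt hXZ) (ne_of_gt hYZ)]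
    unfold invT
    rw [e1, e2, e3, if_neg (not_lt.mpr (le_of_lt hasc)), if_pos hasc]
    split_ifs <;> omega
  · have hasc : w⁻¹ X < w⁻¹ Z := edge_ascent hE h hXZ
    have hw' : w'⁻¹ = w⁻¹ * Equiv.swap X Z := by
      have : w' = Equiv.swap X Z * w := by rw [← h]; group
      rw [this, mul_inv_rev, Equiv.swap_inv]
    have e1 : w'⁻¹ X = w⁻¹ Z := by rw [hw']; simp
    have e2 : w'⁻¹ Z = w⁻¹ X := by rw [hw']; simp
    have e3 : w'⁻¹ Y = w⁻¹ Y := by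
      rw [hw']; simp only [Equiv.Perm.mul_apply]
      rw [swap_apply_ne_ne (ne_of_gt hXY) (ne_of_lt hYZ)]
    unfold invT
    rw [e1, e2, e3, if_neg (not_lt.mpr (le_of_lt hasc))]
    have h2' : w'⁻¹ Z < w'⁻¹ X ↔ True := by rw [e1, e2]; simpa using hasc
    -- goal arithmetic
    rw [if_pos (by rw [e1, e2] at *; exact hasc : w⁻¹ X < w⁻¹ Z)]
    rcases lt_trichotomy (w⁻¹ Y) (w⁻¹ X) with hyx | hyx | hyx <;>
      rcases lt_trichotomy (w⁻¹ Z) (w⁻¹ Y) with hzy | hzy | hzy <;>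
      split_ifs <;> omega
  · have hasc : w⁻¹ Y < w⁻¹ Z := edge_ascent hE h hYZ
    have hw' : w'⁻¹ = w⁻¹ * Equiv.swap Y Z := by
      have : w' = Equiv.swap Y Z * w := by rw [← h]; group
      rw [this, mul_inv_rev, Equiv.swap_inv]
    have e1 : w'⁻¹ Y = w⁻¹ Z := by rw [hw']; simp
    have e2 : w'⁻¹ Z = w⁻¹ Y := by rw [hw']; simp
    have e3 : w'⁻¹ X = w⁻¹ X := by
      rw [hw']; simp only [Equiv.Perm.mul_apply]
      rw [swap_apply_ne_ne (ne_of_lt hXY) (ne_of_lt hXZ)]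
    unfold invT
    rw [e1, e2, e3, if_neg (not_lt.mpr (le_of_lt hasc)), if_pos hasc]
    split_ifs <;> omega

lemma sorted_core {n : ℕ} {X Y Z : Fin n} (hXY : X < Y) (hYZ : Y < Z)
    {w0 w1 w2 w3 : Pm n} (h1 : BEdge w0 w1) (h2 : BEdge w1 w2) (h3 : BEdge w2 w3)
    (s1 : SwapIn3 X Y Z (w1 * w0⁻¹)) (s2 : SwapIn3 X Y Z (w2 * w1⁻¹))
    (s3 : SwapIn3 X Y Z (w3 * w2⁻¹)) :
    (∀ c d, Mem3 X Y Z c → Mem3 X Y Z d → c < d → w0⁻¹ c < w0⁻¹ d) ∧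
    (∀ c d, Mem3 X Y Z c → Mem3 X Y Z d → c < d → w3⁻¹ d < w3⁻¹ c) := by
  have hXZ : X < Z := hXY.trans hYZ
  have k1 := invT_step hXY hYZ h1 s1
  have k2 := invT_step hXY hYZ h2 s2
  have k3 := invT_step hXY hYZ h3 s3
  have hle := invT_le_three X Y Z w3
  have h0 : invT X Y Z w0 = 0 := by omega
  have h3' : invT X Y Z w3 = 3 := by omega
  have inj : ∀ (w : Pm n) (a b : Fin n), a ≠ b → w⁻¹ a ≠ w⁻¹ b := by
    intro w a b hab h
    exact hab ((w⁻¹).injective h)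
  unfold invT at h0 h3'
  constructor
  · have c1 : ¬(w0⁻¹ Y < w0⁻¹ X) := by intro h; rw [if_pos h] at h0; omega
    have c2 : ¬(w0⁻¹ Z < w0⁻¹ X) := by intro h; rw [if_pos h] at h0; split_ifs at h0 <;> omega
    have c3 : ¬(w0⁻¹ Z < w0⁻¹ Y) := by intro h; rw [if_pos h] at h0; split_ifs at h0 <;> omega
    have d1 : w0⁻¹ X < w0⁻¹ Y := lt_of_le_of_ne (not_lt.mp c1) (inj w0 X Y (ne_of_lt hXY))
    have d2 : w0⁻¹ X < w0⁻¹ Z := lt_of_le_of_ne (not_lt.mp c2) (inj w0 X Z (ne_of_lt hXZ))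
    have d3 : w0⁻¹ Y < w0⁻¹ Z := lt_of_le_of_ne (not_lt.mp c3) (inj w0 Y Z (ne_of_lt hYZ))
    intro c d hc hd hcd
    rcases hc with rfl | rfl | rfl <;> rcases hd with rfl | rfl | rfl
    · exact absurd hcd (lt_irrefl _)
    · exact d1
    · exact d2
    · exact absurd hcd (asymm hXY)
    · exact absurd hcd (lt_irrefl _)
    · exact d3
    · exact absurd hcd (asymm hXZ)
    · exact absurd hcd (asymm hYZ)
    · exact absurd hcd (lt_irrefl _)
  · have c1 : w3⁻¹ Y < w3⁻¹ X := by
      by_contra h; rw [if_neg h] at h3'; split_ifs at h3' <;> omega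
    have c2 : w3⁻¹ Z < w3⁻¹ X := by
      by_contra h; rw [if_neg h] at h3'; split_ifs at h3' <;> omega
    have c3 : w3⁻¹ Z < w3⁻¹ Y := by
      by_contra h; rw [if_neg h] at h3'; split_ifs at h3' <;> omega
    intro c d hc hd hcd
    rcases hc with rfl | rfl | rfl <;> rcases hd with rfl | rfl | rfl
    · exact absurd hcd (lt_irrefl _)
    · exact c1
    · exact c2
    · exact absurd hcd (asymm hXY)
    · exact absurd hcd (lt_irrefl _)
    · exact c3
    · exact absurd hcd (asymm hXZ)
    · exact absurd hcd (asymm hYZ)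
    · exact absurd hcd (lt_irrefl _)

/-- orientation of two distinct transpositions sharing a point -/
lemma swap_pair_orient {n : ℕ} {σ1 σ2 : Pm n} {a1 b1 a2 b2 : Fin n}
    (ha1 : a1 ≠ b1) (ha2 : a2 ≠ b2) (h1 : σ1 = Equiv.swap a1 b1) (h2 : σ2 = Equiv.swap a2 b2)
    (hne : σ1 ≠ σ2) (hsh : a1 = a2 ∨ a1 = b2 ∨ b1 = a2 ∨ b1 = b2) :
    ∃ A B C, A ≠ B ∧ B ≠ C ∧ A ≠ C ∧ σ1 = Equiv.swap A B ∧ σ2 = Equiv.swap B C ∧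
      (A = a1 ∨ A = b1) ∧ (B = a1 ∨ B = b1) ∧ (B = a2 ∨ B = b2) ∧ (C = a2 ∨ C = b2) := by
  rcases hsh with h | h | h | h
  · -- a1 = a2 : B = a1, A = b1, C = b2
    refine ⟨b1, a1, b2, ha1.symm, h ▸ ha2, ?_, by rw [h1, Equiv.swap_comm], by rw [h2, h],
      Or.inr rfl, Or.inl rfl, Or.inl h, Or.inr rfl⟩
    intro hc
    exact hne (by rw [h1, h2, ← h, ← hc])
  · -- a1 = b2 : B = a1, A = b1, C = a2
    refine ⟨b1, a1, a2, ha1.symm, h ▸ (fun hh => ha2 hh.symm), ?_,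
      by rw [h1, Equiv.swap_comm], by rw [h2, h, Equiv.swap_comm], Or.inr rfl, Or.inl rfl,
      Or.inr h, Or.inl rfl⟩
    intro hc
    exact hne (by rw [h1, h2, ← h, ← hc, Equiv.swap_comm])
  · -- b1 = a2 : B = b1, A = a1, C = b2
    refine ⟨a1, b1, b2, ha1, h ▸ ha2, ?_, by rw [h1], by rw [h2, h], Or.inl rfl, Or.inr rfl,
      Or.inl h, Or.inr rfl⟩
    intro hc
    exact hne (by rw [h1, h2, ← h, ← hc]; exact Equiv.swap_comm _ _)
  · -- b1 = b2 : B = b1, A = a1, C = a2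
    refine ⟨a1, b1, a2, ha1, h ▸ (fun hh => ha2 hh.symm), ?_, by rw [h1],
      by rw [h2, h, Equiv.swap_comm], Or.inl rfl, Or.inr rfl, Or.inr h, Or.inl rfl⟩
    intro hc
    exact hne (by rw [h1, h2, ← h, ← hc, Equiv.swap_comm])

lemma threePath {n : ℕ} {w0 w1 w2 w3 : Pm n}
    (h1 : BEdge w0 w1) (h2 : BEdge w1 w2) (h3 : BEdge w2 w3)
    (hs : (w3 * w0⁻¹).IsSwap)
    (hlen02 : len w0 < len w2) (hlen13 : len w1 < len w3) :
    ∃ X Y Z : Fin n, X ≠ Y ∧ Y ≠ Z ∧ X ≠ Z ∧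
      SwapIn3 X Y Z (w1 * w0⁻¹) ∧ SwapIn3 X Y Z (w2 * w1⁻¹) ∧ SwapIn3 X Y Z (w3 * w2⁻¹) ∧
      SwapIn3 X Y Z (w3 * w0⁻¹) ∧
      (∀ c d, Mem3 X Y Z c → Mem3 X Y Z d → c < d → w0⁻¹ c < w0⁻¹ d) ∧
      (∀ c d, Mem3 X Y Z c → Mem3 X Y Z d → c < d → w3⁻¹ d < w3⁻¹ c) := by
  obtain ⟨a1, b1, hab1, hc1⟩ := h1.1
  obtain ⟨a2, b2, hab2, hc2⟩ := h2.1
  obtain ⟨a3, b3, hab3, hc3⟩ := h3.1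
  have sprod : w3 * w0⁻¹ = (w3 * w2⁻¹) * ((w2 * w1⁻¹) * (w1 * w0⁻¹)) := by group
  have hne12 : w1 * w0⁻¹ ≠ w2 * w1⁻¹ := by
    intro h
    have e' : w2 = (w2 * w1⁻¹) * ((w1 * w0⁻¹) * w0) := by group
    rw [← h, hc1, ← mul_assoc, Equiv.swap_mul_self, one_mul] at e'
    rw [e'] at hlen02
    exact absurd hlen02 (lt_irrefl _)
  have hne23 : w2 * w1⁻¹ ≠ w3 * w2⁻¹ := by
    intro h
    have e' : w3 = (w3 * w2⁻¹) * ((w2 * w1⁻¹) * w1) := by group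
    rw [← h, hc2, ← mul_assoc, Equiv.swap_mul_self, one_mul] at e'
    rw [e'] at hlen13
    exact absurd hlen13 (lt_irrefl _)
  have heqUF : (w3 * w2⁻¹) * (w3 * w0⁻¹) = (w2 * w1⁻¹) * (w1 * w0⁻¹) := by
    rw [sprod, ← mul_assoc, hc3, ← mul_assoc, Equiv.swap_mul_self, one_mul]
  by_cases hsh : a1 = a2 ∨ a1 = b2 ∨ b1 = a2 ∨ b1 = b2
  · -- shared point case
    obtain ⟨A, B, C, hAB, hBC, hAC, hAB1, hBC2, mA, mB1, mB2, mC⟩ :=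
      swap_pair_orient hab1 hab2 hc1 hc2 (fun h => hne12 (by rw [hc1, hc2] at h ⊢; exact h)) hsh
    have heq5 : (w3 * w2⁻¹) * (w3 * w0⁻¹) = Equiv.swap B C * Equiv.swap A B := by
      rw [heqUF, ← hAB1, ← hBC2]
    obtain ⟨sw3, sws⟩ := swap_factor_triple hAB hBC hAC h3.1 hs heq5
    have sw1 : SwapIn3 A B C (w1 * w0⁻¹) :=
      ⟨A, B, hAB, Or.inl rfl, Or.inr (Or.inl rfl), hAB1⟩
    have sw2 : SwapIn3 A B C (w2 * w1⁻¹) :=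
      ⟨B, C, hBC, Or.inr (Or.inl rfl), Or.inr (Or.inr rfl), hBC2⟩
    -- sort A B C
    have main : ∀ X Y Z : Fin n, X < Y → Y < Z →
        (∀ e, Mem3 A B C e → Mem3 X Y Z e) → (∀ e, Mem3 X Y Z e → Mem3 A B C e) →
        ∃ X' Y' Z' : Fin n, X' ≠ Y' ∧ Y' ≠ Z' ∧ X' ≠ Z' ∧
          SwapIn3 X' Y' Z' (w1 * w0⁻¹) ∧ SwapIn3 X' Y' Z' (w2 * w1⁻¹) ∧
          SwapIn3 X' Y' Z' (w3 * w2⁻¹) ∧ SwapIn3 X' Y' Z' (w3 * w0⁻¹) ∧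
          (∀ c d, Mem3 X' Y' Z' c → Mem3 X' Y' Z' d → c < d → w0⁻¹ c < w0⁻¹ d) ∧
          (∀ c d, Mem3 X' Y' Z' c → Mem3 X' Y' Z' d → c < d → w3⁻¹ d < w3⁻¹ c) := by
      intro X Y Z hXY hYZ hconv hconv'
      have hc := sorted_core hXY hYZ h1 h2 h3 (swapIn3_perm hconv sw1)
        (swapIn3_perm hconv sw2) (swapIn3_perm hconv sw3)
      exact ⟨X, Y, Z, ne_of_lt hXY, ne_of_lt hYZ, ne_of_lt (hXY.trans hYZ),
        swapIn3_perm hconv sw1, swapIn3_perm hconv sw2, swapIn3_perm hconv sw3,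
        swapIn3_perm hconv sws, hc.1, hc.2⟩
    rcases lt_trichotomy A B with hab | hab | hab
    · rcases lt_trichotomy B C with hbc | hbc | hbc
      · exact main A B C hab hbc (fun e he => he) (fun e he => he)
      · exact absurd hbc hBC
      · rcases lt_trichotomy A C with hac | hac | hac
        · exact main A C B hac hbc
            (fun e he => he.elim Or.inl (fun h => h.elim (fun h => Or.inr (Or.inr h)) (fun h => Or.inr (Or.inl h))))
            (fun e he => he.elim Or.inl (fun h => h.elim (fun h => Or.inr (Or.inr h)) (fun h => Or.inr (Or.inl h))))
        · exact absurd hac hAC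
        · exact main C A B hac hab
            (fun e he => he.elim (fun h => Or.inr (Or.inl h)) (fun h => h.elim (fun h => Or.inr (Or.inr h)) Or.inl))
            (fun e he => he.elim (fun h => Or.inr (Or.inr h)) (fun h => h.elim Or.inl (fun h => Or.inr (Or.inl h))))
    · exact absurd hab hAB
    · rcases lt_trichotomy A C with hac | hac | hac
      · exact main B A C hab hac
          (fun e he => he.elim (fun h => Or.inr (Or.inl h)) (fun h => h.elim Or.inl (fun h => Or.inr (Or.inr h))))
          (fun e he => he.elim (fun h => Or.inr (Or.inl h)) (fun h => h.elim Or.inl (fun h => Or.inr (Or.inr h))))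
      · exact absurd hac hAC
      · rcases lt_trichotomy B C with hbc | hbc | hbc
        · exact main B C A hbc hac
            (fun e he => he.elim (fun h => Or.inr (Or.inr h)) (fun h => h.elim Or.inl (fun h => Or.inr (Or.inl h))))
            (fun e he => he.elim (fun h => Or.inr (Or.inl h)) (fun h => h.elim (fun h => Or.inr (Or.inr h)) Or.inl))
        · exact absurd hbc hBC
        · exact main C B A hbc hab
            (fun e he => he.elim (fun h => Or.inr (Or.inr h)) (fun h => h.elim (fun h => Or.inr (Or.inl h)) Or.inl))
            (fun e he => he.elim (fun h => Or.inr (Or.inr h)) (fun h => h.elim (fun h => Or.inr (Or.inl h)) Or.inl))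
  · -- disjoint case : contradiction
    exfalso
    push_neg at hsh
    obtain ⟨d1, d2, d3, d4⟩ := hsh
    have hUF := swap_factor_disjoint hab2 hab1 (fun h => d1 h.symm) (fun h => d3 h.symm)
      (fun h => d2 h.symm) (fun h => d4 h.symm) h3.1 hs
      (by rw [heqUF, hc1, hc2])
    rcases hUF with ⟨hA, _⟩ | ⟨hA, _⟩
    · exact hne23 (by rw [hc2, hA])
    · -- c3 = c1 : ascent contradiction
      have hc3' : w3 * w2⁻¹ = Equiv.swap a1 b1 := hA
      have hw2inv : ∀ e : Fin n, e ≠ a2 → e ≠ b2 → w2⁻¹ e = w0⁻¹ (Equiv.swap a1 b1 e) := by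
        intro e he1 he2
        have hw2 : w2 = Equiv.swap a2 b2 * (Equiv.swap a1 b1 * w0) := by
          rw [← hc1, ← hc2]; group
        rw [hw2]
        simp only [mul_inv_rev, Equiv.swap_inv, Equiv.Perm.mul_apply]
        rw [swap_apply_ne_ne he1 he2]
      rcases lt_trichotomy a1 b1 with hlt | hlt | hlt
      · have asc1 : w0⁻¹ a1 < w0⁻¹ b1 := edge_ascent h1 hc1 hlt
        have asc3 : w2⁻¹ a1 < w2⁻¹ b1 := edge_ascent h3 hc3' hlt
        rw [hw2inv a1 (fun h => d1 h) (fun h => d2 h),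
          hw2inv b1 (fun h => d3 h) (fun h => d4 h)] at asc3
        rw [Equiv.swap_apply_left, Equiv.swap_apply_right] at asc3
        exact absurd (asc1.trans asc3) (lt_irrefl _)
      · exact hab1 hlt
      · have hc1' : w1 * w0⁻¹ = Equiv.swap b1 a1 := by rw [hc1, Equiv.swap_comm]
        have hc3'' : w3 * w2⁻¹ = Equiv.swap b1 a1 := by rw [hc3', Equiv.swap_comm]
        have asc1 : w0⁻¹ b1 < w0⁻¹ a1 := edge_ascent h1 hc1' hlt
        have asc3 : w2⁻¹ b1 < w2⁻¹ a1 := edge_ascent h3 hc3'' hlt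
        rw [hw2inv a1 (fun h => d1 h) (fun h => d2 h),
          hw2inv b1 (fun h => d3 h) (fun h => d4 h)] at asc3
        rw [Equiv.swap_apply_left, Equiv.swap_apply_right] at asc3
        exact absurd (asc1.trans asc3) (lt_irrefl _)

/-- The connectivity relation generated by the labels of a path. -/
def ER {n : ℕ} (p : ℕ → Pm n) : Fin n → Fin n → Prop :=
  Relation.ReflTransGen (fun e f => e ≠ f ∧ ∃ k, k < 4 ∧ lab p k e = f)

lemma rtg_lift {α : Type*} {g h : α → α → Prop}
    (H : ∀ a b, g a b → Relation.ReflTransGen h a b) :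
    ∀ a b, Relation.ReflTransGen g a b → Relation.ReflTransGen h a b := by
  intro a b hab
  induction hab with
  | refl => exact Relation.ReflTransGen.refl
  | tail h1 h2 ih => exact ih.trans (H _ _ h2)

lemma conn_of_two {n : ℕ} {p : ℕ → Pm n} {k1 k2 : ℕ} (hk1 : k1 < 4) (hk2 : k2 < 4)
    {A B C : Fin n} (hl1 : lab p k1 = Equiv.swap A B) (hl2 : lab p k2 = Equiv.swap B C)
    (hAB : A ≠ B) (hBC : B ≠ C) (hAC : A ≠ C) :
    ∀ e f, Mem3 A B C e → Mem3 A B C f → ER p e f := by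
  have stAB : ER p A B := Relation.ReflTransGen.single
    ⟨hAB, k1, hk1, by rw [hl1]; exact Equiv.swap_apply_left _ _⟩
  have stBA : ER p B A := Relation.ReflTransGen.single
    ⟨hAB.symm, k1, hk1, by rw [hl1]; exact Equiv.swap_apply_right _ _⟩
  have stBC : ER p B C := Relation.ReflTransGen.single
    ⟨hBC, k2, hk2, by rw [hl2]; exact Equiv.swap_apply_left _ _⟩
  have stCB : ER p C B := Relation.ReflTransGen.single
    ⟨hBC.symm, k2, hk2, by rw [hl2]; exact Equiv.swap_apply_right _ _⟩
  intro e f he hf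
  rcases he with rfl | rfl | rfl <;> rcases hf with rfl | rfl | rfl
  · exact Relation.ReflTransGen.refl
  · exact stAB
  · exact stAB.trans stBC
  · exact stBA
  · exact Relation.ReflTransGen.refl
  · exact stBC
  · exact stCB.trans stBA
  · exact stCB
  · exact Relation.ReflTransGen.refl

lemma flipstep_symm {n : ℕ} {u v : Pm n} {r r' : ℕ → Pm n}
    (h : FlipStep n 4 u v r r') : FlipStep n 4 u v r' r := by
  obtain ⟨h1, h2, i, hi0, hi4, hne, hall⟩ := h
  exact ⟨h2, h1, i, hi0, hi4, hne.symm, fun j hj => (hall j hj).symm⟩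

lemma gen_sub {n : ℕ} {u v : Pm n} {r r' : ℕ → Pm n} (hstep : FlipStep n 4 u v r r') :
    ∀ e f, e ≠ f → ∀ k, k < 4 → lab r' k e = f → ER r e f := by
  obtain ⟨hr, hr', i, hi0, hi4, hine, hiall⟩ := hstep
  obtain ⟨m, rfl⟩ : ∃ m, i = m + 1 := ⟨i - 1, by omega⟩
  intro e f hef k hk hlabk
  by_cases hkm : k ≠ m ∧ k ≠ m + 1
  · -- label unchanged
    have hv1 : r' k = r k := (hiall k (by omega)).symm
    have hv2 : r' (k + 1) = r (k + 1) := (hiall (k + 1) (by omega)).symm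
    have : lab r' k = lab r k := by unfold lab; rw [hv1, hv2]
    exact Relation.ReflTransGen.single ⟨hef, k, hk, by rw [← this]; exact hlabk⟩
  · -- k = m or k = m+1 : the diamond
    have hv0 : r m = r' m := hiall m (by omega)
    have hv2 : r (m + 2) = r' (m + 2) := hiall (m + 2) (by omega)
    have l1 : lab r (m + 1) * lab r m = r (m + 2) * (r m)⁻¹ := by unfold lab; group
    have l2 : lab r' (m + 1) * lab r' m = r' (m + 2) * (r' m)⁻¹ := by unfold lab; group
    have hprod : lab r' (m + 1) * lab r' m = lab r (m + 1) * lab r m := by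
      rw [l1, l2, hv0, hv2]
    have hm4 : m < 4 := by omega
    have hm14 : m + 1 < 4 := by omega
    obtain ⟨a1, b1, hab1, hα⟩ := lab_isSwap hr hm4
    obtain ⟨a2, b2, hab2, hβ⟩ := lab_isSwap hr hm14
    have hαβ : lab r m ≠ lab r (m + 1) := consec_lab_ne hr hm14
    have hklab : lab r' k = lab r' m ∨ lab r' k = lab r' (m + 1) := by
      rcases (by omega : k = m ∨ k = m + 1) with h | h <;> rw [h] <;> [exact Or.inl rfl; exact Or.inr rfl]
    by_cases hsh : a1 = a2 ∨ a1 = b2 ∨ b1 = a2 ∨ b1 = b2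
    · -- shared point
      obtain ⟨A, B, C, hAB, hBC, hAC, hAB1, hBC2, mA, mB1, mB2, mC⟩ :=
        swap_pair_orient hab1 hab2 hα hβ (fun h => hαβ (by rw [hα, hβ] at h ⊢; exact h)) hsh
      have heq5 : lab r' (m + 1) * lab r' m = Equiv.swap B C * Equiv.swap A B := by
        rw [hprod, ← hAB1, ← hBC2]
      obtain ⟨swβ', swα'⟩ := swap_factor_triple hAB hBC hAC
        (lab_isSwap hr' hm14) (lab_isSwap hr' hm4) heq5
      have hin : SwapIn3 A B C (lab r' k) := by
        rcases hklab with h | h <;> rw [h] <;> [exact swα'; exact swβ']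
      obtain ⟨c, d, hcd, hc, hd, hrep⟩ := hin
      rw [hrep] at hlabk
      rcases swap_pair_eq hlabk hef with ⟨he, hf⟩ | ⟨he, hf⟩
      · exact conn_of_two hm4 hm14 hAB1 hBC2 hAB hBC hAC e f (he ▸ hc) (hf ▸ hd)
      · exact conn_of_two hm4 hm14 hAB1 hBC2 hAB hBC hAC e f (he ▸ hd) (hf ▸ hc)
    · -- disjoint
      push_neg at hsh
      obtain ⟨d1, d2, d3, d4⟩ := hsh
      have hUF := swap_factor_disjoint hab2 hab1 (fun h => d1 h.symm) (fun h => d3 h.symm)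
        (fun h => d2 h.symm) (fun h => d4 h.symm)
        (lab_isSwap hr' hm14) (lab_isSwap hr' hm4)
        (by rw [hprod, hα, hβ])
      have hin : lab r' k = lab r m ∨ lab r' k = lab r (m + 1) := by
        rcases hklab with h | h <;> rw [h]
        · rcases hUF with ⟨_, h2⟩ | ⟨_, h2⟩
          · exact Or.inl (by rw [h2, hα])
          · exact Or.inr (by rw [h2, hβ])
        · rcases hUF with ⟨h1, _⟩ | ⟨h1, _⟩
          · exact Or.inr (by rw [h1, hβ])
          · exact Or.inl (by rw [h1, hα])
      rcases hin with h | h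
      · exact Relation.ReflTransGen.single ⟨hef, m, hm4, by rw [← h]; exact hlabk⟩
      · exact Relation.ReflTransGen.single ⟨hef, m + 1, hm14, by rw [← h]; exact hlabk⟩

lemma ER_flip {n : ℕ} {u v : Pm n} {r r' : ℕ → Pm n} (h : FlipStep n 4 u v r r') :
    ∀ e f, ER r e f ↔ ER r' e f := by
  intro e f
  constructor
  · exact fun hh => rtg_lift (fun a b ⟨h1, k, h2, h3⟩ =>
      gen_sub (flipstep_symm h) a b h1 k h2 h3) e f hh
  · exact fun hh => rtg_lift (fun a b ⟨h1, k, h2, h3⟩ => gen_sub h a b h1 k h2 h3) e f hh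

lemma ER_const {n : ℕ} {u v : Pm n} {F : Set (ℕ → Pm n)} (hF : IsFlipclass n 4 u v F)
    {p q : ℕ → Pm n} (hp : p ∈ F) (hq : q ∈ F) : ∀ e f, ER p e f ↔ ER q e f := by
  obtain ⟨p₀, hp₀, hFeq⟩ := hF
  rw [hFeq] at hp hq
  have base : ∀ r, Relation.ReflTransGen (FlipStep n 4 u v) p₀ r →
      ∀ e f, ER p₀ e f ↔ ER r e f := by
    intro r hr
    induction hr with
    | refl => exact fun e f => Iff.rfl
    | tail h1 h2 ih => exact fun e f => (ih e f).trans (ER_flip h2 e f)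
  exact fun e f => ((base p hp e f).symm).trans (base q hq e f)

lemma ER_contain {n : ℕ} {p : ℕ → Pm n} (P : Fin n → Prop)
    (hgen : ∀ k, k < 4 → ∀ e f, e ≠ f → lab p k e = f → P e ∧ P f) :
    ∀ e f, ER p e f → e = f ∨ (P e ∧ P f) := by
  intro e f h
  induction h with
  | refl => exact Or.inl rfl
  | tail h1 h2 ih =>
    obtain ⟨hne, k, hk, hlab⟩ := h2
    have hP := hgen k hk _ _ hne hlab
    rcases ih with rfl | ⟨hPe, hPb⟩
    · exact Or.inr hP
    · exact Or.inr ⟨hPe, hP.2⟩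

lemma ER_contain2 {n : ℕ} {p : ℕ → Pm n} (P Q : Fin n → Prop)
    (hdisj : ∀ e, P e → Q e → False)
    (hgen : ∀ k, k < 4 → ∀ e f, e ≠ f → lab p k e = f → (P e ∧ P f) ∨ (Q e ∧ Q f)) :
    ∀ e f, ER p e f → e = f ∨ (P e ∧ P f) ∨ (Q e ∧ Q f) := by
  intro e f h
  induction h with
  | refl => exact Or.inl rfl
  | tail h1 h2 ih =>
    obtain ⟨hne, k, hk, hlab⟩ := h2
    have hP := hgen k hk _ _ hne hlab
    rcases ih with rfl | ⟨hPe, hPb⟩ | ⟨hQe, hQb⟩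
    · exact Or.inr hP
    · rcases hP with ⟨hPb', hPc⟩ | ⟨hQb', hQc⟩
      · exact Or.inr (Or.inl ⟨hPe, hPc⟩)
      · exact absurd hQb' (fun h => hdisj _ hPb h)
    · rcases hP with ⟨hPb', hPc⟩ | ⟨hQb', hQc⟩
      · exact absurd hPb' (fun h => hdisj _ h hQb)
      · exact Or.inr (Or.inr ⟨hQe, hQc⟩)

/-- two distinct transpositions inside a triple share a point and can be oriented -/
lemma swapIn3_shared {n : ℕ} {X Y Z : Fin n} (dXY : X ≠ Y) (dYZ : Y ≠ Z) (dXZ : X ≠ Z)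
    {σ1 σ2 : Pm n} (h1 : SwapIn3 X Y Z σ1) (h2 : SwapIn3 X Y Z σ2) (hne : σ1 ≠ σ2) :
    ∃ A B C, A ≠ B ∧ B ≠ C ∧ A ≠ C ∧ σ1 = Equiv.swap A B ∧ σ2 = Equiv.swap B C ∧
      Mem3 X Y Z A ∧ Mem3 X Y Z B ∧ Mem3 X Y Z C := by
  obtain ⟨c1, d1, hcd1, hc1, hd1, hr1⟩ := h1
  obtain ⟨c2, d2, hcd2, hc2, hd2, hr2⟩ := h2
  have hsh : c1 = c2 ∨ c1 = d2 ∨ d1 = c2 ∨ d1 = d2 := by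
    by_contra hc
    push_neg at hc
    obtain ⟨e1, e2, e3, e4⟩ := hc
    rcases hc1 with rfl | rfl | rfl <;> rcases hd1 with rfl | rfl | rfl <;>
      rcases hc2 with rfl | rfl | rfl <;> rcases hd2 with rfl | rfl | rfl <;> tauto
  obtain ⟨A, B, C, hAB, hBC, hAC, hr1', hr2', mA, mB1, mB2, mC⟩ :=
    swap_pair_orient hcd1 hcd2 hr1 hr2 hne hsh
  refine ⟨A, B, C, hAB, hBC, hAC, hr1', hr2', ?_, ?_, ?_⟩
  · rcases mA with rfl | rfl <;> assumption
  · rcases mB1 with rfl | rfl <;> assumption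
  · rcases mC with rfl | rfl <;> assumption

lemma triple_cover {n : ℕ} {X Y Z A B C : Fin n}
    (dAB : A ≠ B) (dBC : B ≠ C) (dAC : A ≠ C)
    (mA : Mem3 X Y Z A) (mB : Mem3 X Y Z B) (mC : Mem3 X Y Z C) :
    ∀ e, Mem3 X Y Z e → Mem3 A B C e := by
  intro e he
  unfold Mem3 at *
  rcases mA with rfl | rfl | rfl <;> rcases mB with rfl | rfl | rfl <;>
    rcases mC with rfl | rfl | rfl <;> tauto


lemma pigeon2 {α : Type*} {X Y Z s1 s2 : α} (dXY : X ≠ Y) (dYZ : Y ≠ Z) (dXZ : X ≠ Z)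
    (hX : X = s1 ∨ X = s2) (hY : Y = s1 ∨ Y = s2) (hZ : Z = s1 ∨ Z = s2) : False := by
  rcases hX with rfl | rfl <;> rcases hY with rfl | rfl <;> rcases hZ with rfl | rfl <;>
    simp_all

lemma core13 {n : ℕ} {u v : Pm n} {F : Set (ℕ → Pm n)} (hF : IsFlipclass n 4 u v F)
    {p q : ℕ → Pm n} (hp : p ∈ F) (hq : q ∈ F) (hx : p 1 = q 3) : False := by
  have hpP := mem_flipclass_isPath hF hp
  have hqP := mem_flipclass_isPath hF hq
  have hp4v : p 4 = v := hpP.2.1 4 le_rfl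
  have hq4v : q 4 = v := hqP.2.1 4 le_rfl
  have hp0u : p 0 = u := hpP.1
  have hq0u : q 0 = u := hqP.1
  have hseq : p 4 * (p 1)⁻¹ = lab q 3 := by rw [hp4v, hx, ← hq4v]; rfl
  have hsP : (p 4 * (p 1)⁻¹).IsSwap := by rw [hseq]; exact lab_isSwap hqP (by norm_num)
  have hteq : q 3 * (q 0)⁻¹ = lab p 0 := by rw [hq0u, ← hp0u, ← hx]; rfl
  have htP : (q 3 * (q 0)⁻¹).IsSwap := by rw [hteq]; exact lab_isSwap hpP (by norm_num)
  obtain ⟨X, Y, Z, dXY, dYZ, dXZ, swp1, swp2, swp3, swps, incr, _⟩ :=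
    threePath (hpP.2.2 1 (by norm_num)) (hpP.2.2 2 (by norm_num)) (hpP.2.2 3 (by norm_num))
      hsP (path_len_lt hpP (by norm_num : (1:ℕ) < 3) (by norm_num))
      (path_len_lt hpP (by norm_num : (2:ℕ) < 4) (by norm_num))
  obtain ⟨X', Y', Z', dXY', dYZ', dXZ', swq1, swq2, swq3, swqt, _, decr'⟩ :=
    threePath (hqP.2.2 0 (by norm_num)) (hqP.2.2 1 (by norm_num)) (hqP.2.2 2 (by norm_num))
      htP (path_len_lt hqP (by norm_num : (0:ℕ) < 2) (by norm_num))
      (path_len_lt hqP (by norm_num : (1:ℕ) < 3) (by norm_num))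
  simp only [Nat.reduceAdd] at swp1 swp2 swp3 swps swq1 swq2 swq3 swqt decr'
  -- label identifications
  have lp1 : lab p 1 = p 2 * (p 1)⁻¹ := rfl
  have lp2 : lab p 2 = p 3 * (p 2)⁻¹ := rfl
  have lp3 : lab p 3 = p 4 * (p 3)⁻¹ := rfl
  have lq0 : lab q 0 = q 1 * (q 0)⁻¹ := rfl
  have lq1 : lab q 1 = q 2 * (q 1)⁻¹ := rfl
  have lq2 : lab q 2 = q 3 * (q 2)⁻¹ := rfl
  obtain ⟨s1, s2, hs12, ms1, ms2, hsrep⟩ := swps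
  obtain ⟨t1, t2, ht12, mt1, mt2, htrep⟩ := swqt
  have hlabq3 : lab q 3 = Equiv.swap s1 s2 := by rw [← hseq, hsrep]
  have hlabp0 : lab p 0 = Equiv.swap t1 t2 := by rw [← hteq, htrep]
  have hEpq := ER_const hF hp hq
  have hne12p : lab p 1 ≠ lab p 2 := consec_lab_ne hpP (by norm_num)
  obtain ⟨A, B, C, hAB, hBC, hAC, hr1, hr2, mAp, mBp, mCp⟩ :=
    swapIn3_shared dXY dYZ dXZ (show SwapIn3 X Y Z (lab p 1) from lp1 ▸ swp1)
      (show SwapIn3 X Y Z (lab p 2) from lp2 ▸ swp2) hne12p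
  have connABC := conn_of_two (show (1:ℕ) < 4 by norm_num) (show (2:ℕ) < 4 by norm_num)
    hr1 hr2 hAB hBC hAC
  have connAll : ∀ a b, Mem3 X Y Z a → Mem3 X Y Z b → ER p a b := fun a b ha hb =>
    connABC a b (triple_cover hAB hBC hAC mAp mBp mCp a ha)
      (triple_cover hAB hBC hAC mAp mBp mCp b hb)
  have hne01q : lab q 0 ≠ lab q 1 := consec_lab_ne hqP (by norm_num)
  obtain ⟨A', B', C', hAB', hBC', hAC', hr1', hr2', mAq, mBq, mCq⟩ :=
    swapIn3_shared dXY' dYZ' dXZ' (show SwapIn3 X' Y' Z' (lab q 0) from lq0 ▸ swq1)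
      (show SwapIn3 X' Y' Z' (lab q 1) from lq1 ▸ swq2) hne01q
  have connABC' := conn_of_two (show (0:ℕ) < 4 by norm_num) (show (1:ℕ) < 4 by norm_num)
    hr1' hr2' hAB' hBC' hAC'
  have connAll' : ∀ a b, Mem3 X' Y' Z' a → Mem3 X' Y' Z' b → ER q a b := fun a b ha hb =>
    connABC' a b (triple_cover hAB' hBC' hAC' mAq mBq mCq a ha)
      (triple_cover hAB' hBC' hAC' mAq mBq mCq b hb)
  -- containment of ER q in {s1,s2} ∪ T'
  have containq := ER_contain (p := q) (fun e => e = s1 ∨ e = s2 ∨ Mem3 X' Y' Z' e) (by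
    intro k hk e f hef hlab
    interval_cases k
    · obtain ⟨c, d, hcd, hc, hd, hrep⟩ := (show SwapIn3 X' Y' Z' (lab q 0) from lq0 ▸ swq1)
      rw [hrep] at hlab
      rcases swap_pair_eq hlab hef with ⟨rfl, rfl⟩ | ⟨rfl, rfl⟩ <;>
        exact ⟨Or.inr (Or.inr (by assumption)), Or.inr (Or.inr (by assumption))⟩
    · obtain ⟨c, d, hcd, hc, hd, hrep⟩ := (show SwapIn3 X' Y' Z' (lab q 1) from lq1 ▸ swq2)
      rw [hrep] at hlab
      rcases swap_pair_eq hlab hef with ⟨rfl, rfl⟩ | ⟨rfl, rfl⟩ <;>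
        exact ⟨Or.inr (Or.inr (by assumption)), Or.inr (Or.inr (by assumption))⟩
    · obtain ⟨c, d, hcd, hc, hd, hrep⟩ := (show SwapIn3 X' Y' Z' (lab q 2) from lq2 ▸ swq3)
      rw [hrep] at hlab
      rcases swap_pair_eq hlab hef with ⟨rfl, rfl⟩ | ⟨rfl, rfl⟩ <;>
        exact ⟨Or.inr (Or.inr (by assumption)), Or.inr (Or.inr (by assumption))⟩
    · rw [hlabq3] at hlab
      rcases swap_pair_eq hlab hef with ⟨rfl, rfl⟩ | ⟨rfl, rfl⟩
      · exact ⟨Or.inl rfl, Or.inr (Or.inl rfl)⟩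
      · exact ⟨Or.inr (Or.inl rfl), Or.inl rfl⟩)
  -- containment of ER p in {t1,t2} ∪ T
  have containp := ER_contain (p := p) (fun e => e = t1 ∨ e = t2 ∨ Mem3 X Y Z e) (by
    intro k hk e f hef hlab
    interval_cases k
    · rw [hlabp0] at hlab
      rcases swap_pair_eq hlab hef with ⟨rfl, rfl⟩ | ⟨rfl, rfl⟩
      · exact ⟨Or.inl rfl, Or.inr (Or.inl rfl)⟩
      · exact ⟨Or.inr (Or.inl rfl), Or.inl rfl⟩
    · obtain ⟨c, d, hcd, hc, hd, hrep⟩ := (show SwapIn3 X Y Z (lab p 1) from lp1 ▸ swp1)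
      rw [hrep] at hlab
      rcases swap_pair_eq hlab hef with ⟨rfl, rfl⟩ | ⟨rfl, rfl⟩ <;>
        exact ⟨Or.inr (Or.inr (by assumption)), Or.inr (Or.inr (by assumption))⟩
    · obtain ⟨c, d, hcd, hc, hd, hrep⟩ := (show SwapIn3 X Y Z (lab p 2) from lp2 ▸ swp2)
      rw [hrep] at hlab
      rcases swap_pair_eq hlab hef with ⟨rfl, rfl⟩ | ⟨rfl, rfl⟩ <;>
        exact ⟨Or.inr (Or.inr (by assumption)), Or.inr (Or.inr (by assumption))⟩
    · obtain ⟨c, d, hcd, hc, hd, hrep⟩ := (show SwapIn3 X Y Z (lab p 3) from lp3 ▸ swp3)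
      rw [hrep] at hlab
      rcases swap_pair_eq hlab hef with ⟨rfl, rfl⟩ | ⟨rfl, rfl⟩ <;>
        exact ⟨Or.inr (Or.inr (by assumption)), Or.inr (Or.inr (by assumption))⟩)
  have Tsub : ∀ e f, Mem3 X Y Z e → Mem3 X Y Z f → e ≠ f →
      (e = s1 ∨ e = s2 ∨ Mem3 X' Y' Z' e) := by
    intro e f he hf hef
    rcases containq e f ((hEpq e f).mp (connAll e f he hf)) with h | h
    · exact absurd h hef
    · exact h.1
  have T'sub : ∀ e f, Mem3 X' Y' Z' e → Mem3 X' Y' Z' f → e ≠ f →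
      (e = t1 ∨ e = t2 ∨ Mem3 X Y Z e) := by
    intro e f he hf hef
    rcases containp e f ((hEpq e f).mpr (connAll' e f he hf)) with h | h
    · exact absurd h hef
    · exact h.1
  by_cases hpair : ∃ c d, c ≠ d ∧ Mem3 X Y Z c ∧ Mem3 X Y Z d ∧
      Mem3 X' Y' Z' c ∧ Mem3 X' Y' Z' d
  · obtain ⟨c, d, hcd, hc, hd, hc', hd'⟩ := hpair
    rcases lt_or_gt_of_ne hcd with hlt | hlt
    · have h1 := incr c d hc hd hlt
      have h2 := decr' c d hc' hd' hlt
      rw [← hx] at h2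
      exact absurd (h1.trans h2) (lt_irrefl _)
    · have h1 := incr d c hd hc hlt
      have h2 := decr' d c hd' hc' hlt
      rw [← hx] at h2
      exact absurd (h1.trans h2) (lt_irrefl _)
  · push_neg at hpair
    -- step A : some element of T is in T'
    obtain ⟨m, hmT, hmT'⟩ : ∃ m, Mem3 X Y Z m ∧ Mem3 X' Y' Z' m := by
      by_cases mX' : Mem3 X' Y' Z' X
      · exact ⟨X, Or.inl rfl, mX'⟩
      by_cases mY' : Mem3 X' Y' Z' Y
      · exact ⟨Y, Or.inr (Or.inl rfl), mY'⟩
      by_cases mZ' : Mem3 X' Y' Z' Z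
      · exact ⟨Z, Or.inr (Or.inr rfl), mZ'⟩
      exfalso
      have hX := Tsub X Y (Or.inl rfl) (Or.inr (Or.inl rfl)) dXY
      have hY := Tsub Y X (Or.inr (Or.inl rfl)) (Or.inl rfl) dXY.symm
      have hZ := Tsub Z X (Or.inr (Or.inr rfl)) (Or.inl rfl) dXZ.symm
      rcases hX with h | h | h
      · rcases hY with h2 | h2 | h2
        · rcases hZ with h3 | h3 | h3
          · exact pigeon2 (s1 := s1) (s2 := s2) dXY dYZ dXZ (Or.inl h) (Or.inl h2) (Or.inl h3)
          · exact pigeon2 (s1 := s1) (s2 := s2) dXY dYZ dXZ (Or.inl h) (Or.inl h2) (Or.inr h3)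
          · exact mZ' h3
        · rcases hZ with h3 | h3 | h3
          · exact pigeon2 (s1 := s1) (s2 := s2) dXY dYZ dXZ (Or.inl h) (Or.inr h2) (Or.inl h3)
          · exact pigeon2 (s1 := s1) (s2 := s2) dXY dYZ dXZ (Or.inl h) (Or.inr h2) (Or.inr h3)
          · exact mZ' h3
        · exact mY' h2
      · rcases hY with h2 | h2 | h2
        · rcases hZ with h3 | h3 | h3
          · exact pigeon2 (s1 := s1) (s2 := s2) dXY dYZ dXZ (Or.inr h) (Or.inl h2) (Or.inl h3)
          · exact pigeon2 (s1 := s1) (s2 := s2) dXY dYZ dXZ (Or.inr h) (Or.inl h2) (Or.inr h3)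
          · exact mZ' h3
        · rcases hZ with h3 | h3 | h3
          · exact pigeon2 (s1 := s1) (s2 := s2) dXY dYZ dXZ (Or.inr h) (Or.inr h2) (Or.inl h3)
          · exact pigeon2 (s1 := s1) (s2 := s2) dXY dYZ dXZ (Or.inr h) (Or.inr h2) (Or.inr h3)
          · exact mZ' h3
        · exact mY' h2
      · exact mX' h
    -- step B : some element of T' is in T and avoids {t1, t2}
    obtain ⟨m', hm'T', hm'T, hm't1, hm't2⟩ :
        ∃ m', Mem3 X' Y' Z' m' ∧ Mem3 X Y Z m' ∧ m' ≠ t1 ∧ m' ≠ t2 := by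
      have get : ∀ e f, Mem3 X' Y' Z' e → Mem3 X' Y' Z' f → e ≠ f →
          ¬(e = t1 ∨ e = t2) → ∃ m', Mem3 X' Y' Z' m' ∧ Mem3 X Y Z m' ∧
            m' ≠ t1 ∧ m' ≠ t2 := by
        intro e f he hf hef hne
        push_neg at hne
        rcases T'sub e f he hf hef with h | h | h
        · exact absurd h hne.1
        · exact absurd h hne.2
        · exact ⟨e, he, h, hne.1, hne.2⟩
      by_cases hX' : X' = t1 ∨ X' = t2
      · by_cases hY' : Y' = t1 ∨ Y' = t2
        · by_cases hZ' : Z' = t1 ∨ Z' = t2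
          · exact absurd (pigeon2 dXY' dYZ' dXZ' hX' hY' hZ') id
          · exact get Z' X' (Or.inr (Or.inr rfl)) (Or.inl rfl) dXZ'.symm hZ'
        · exact get Y' X' (Or.inr (Or.inl rfl)) (Or.inl rfl) dXY'.symm hY'
      · exact get X' Y' (Or.inl rfl) (Or.inr (Or.inl rfl)) dXY' hX'
    -- m = m'
    have hmm' : m = m' := by
      by_contra hne'
      exact hpair m m' hne' hmT hm'T hmT' hm'T'
    subst hmm'
    -- t1, t2 are not in T
    have ht1T : ¬ Mem3 X Y Z t1 := by
      intro h
      exact hpair t1 m (fun hh => hm't1 hh.symm) h hm'T mt1 hmT'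
    have ht2T : ¬ Mem3 X Y Z t2 := by
      intro h
      exact hpair t2 m (fun hh => hm't2 hh.symm) h hm'T mt2 hmT'
    -- final contradiction via partition containment of ER p
    have contain2 := ER_contain2 (p := p) (fun e => e = t1 ∨ e = t2) (Mem3 X Y Z)
      (by
        intro e hP hQ
        rcases hP with rfl | rfl
        · exact ht1T hQ
        · exact ht2T hQ)
      (by
        intro k hk e f hef hlab
        interval_cases k
        · rw [hlabp0] at hlab
          rcases swap_pair_eq hlab hef with ⟨rfl, rfl⟩ | ⟨rfl, rfl⟩
          · exact Or.inl ⟨Or.inl rfl, Or.inr rfl⟩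
          · exact Or.inl ⟨Or.inr rfl, Or.inl rfl⟩
        · obtain ⟨c, d, hcd, hc, hd, hrep⟩ := (show SwapIn3 X Y Z (lab p 1) from lp1 ▸ swp1)
          rw [hrep] at hlab
          rcases swap_pair_eq hlab hef with ⟨rfl, rfl⟩ | ⟨rfl, rfl⟩ <;>
            exact Or.inr ⟨by assumption, by assumption⟩
        · obtain ⟨c, d, hcd, hc, hd, hrep⟩ := (show SwapIn3 X Y Z (lab p 2) from lp2 ▸ swp2)
          rw [hrep] at hlab
          rcases swap_pair_eq hlab hef with ⟨rfl, rfl⟩ | ⟨rfl, rfl⟩ <;>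
            exact Or.inr ⟨by assumption, by assumption⟩
        · obtain ⟨c, d, hcd, hc, hd, hrep⟩ := (show SwapIn3 X Y Z (lab p 3) from lp3 ▸ swp3)
          rw [hrep] at hlab
          rcases swap_pair_eq hlab hef with ⟨rfl, rfl⟩ | ⟨rfl, rfl⟩ <;>
            exact Or.inr ⟨by assumption, by assumption⟩)
    have hchain : ER p t1 m := (hEpq t1 m).mpr (connAll' t1 m mt1 hmT')
    rcases contain2 t1 m hchain with h | ⟨_, hPm⟩ | ⟨hQt1, _⟩
    · exact hm't1 h.symm
    · rcases hPm with h | h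
      · exact hm't1 h
      · exact hm't2 h
    · exact ht1T hQt1

end FourFlipclassProof

/-- Proposition: for a 4-flipclass `F`, the support graph and the time-support graph are
isomorphic; equivalently, the forgetful map `(x,i) ↦ x` is injective on `V(TS_F)`, i.e.
any two paths of `F` passing through the same permutation do so at the same time. -/
theorem four_flipclass_S_eq_TS (n : ℕ) (u v : Pm n) (F : Set (ℕ → Pm n))
    (hF : IsFlipclass n 4 u v F) :
    ∀ p ∈ F, ∀ q ∈ F, ∀ i j, i ≤ 4 → j ≤ 4 → p i = q j → i = j := by
  have no_col : ∀ p ∈ F, ∀ q ∈ F, ∀ i j, i < j → j ≤ 4 → p i = q j → False := by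
    intro p hp q hq i j hij hj heq
    have hpP := mem_flipclass_isPath hF hp
    have hqP := mem_flipclass_isPath hF hq
    rcases Nat.eq_zero_or_pos i with rfl | hi0
    · -- p 0 = u = q 0 but q 0 ≠ q j
      have h1 : q 0 = q j := by rw [hqP.1, ← hpP.1, heq]
      exact path_ne hqP hij hj h1
    rcases Nat.lt_or_ge j 4 with hj4 | hj4
    · -- interior case : use parity then (1,3)
      have hs1 := path_sign hpP i (by omega)
      have hs2 := path_sign hqP j (by omega)
      have hpq0 : p 0 = q 0 := by rw [hpP.1, hqP.1]
      have hpow : ((-1 : ℤˣ)) ^ i = (-1) ^ j := by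
        have : ((-1 : ℤˣ)) ^ i * Equiv.Perm.sign (p 0) =
            ((-1 : ℤˣ)) ^ j * Equiv.Perm.sign (p 0) := by
          rw [← hs1, heq, hs2, hpq0]
        exact mul_right_cancel this
      have hZ : ((-1 : ℤ)) ^ i = (-1) ^ j := by
        have := congrArg (fun z : ℤˣ => (z : ℤ)) hpow
        simpa using this
      have hi2 : i ≤ 2 := by omega
      have hj3 : j ≤ 3 := by omega
      interval_cases i <;> interval_cases j
      · norm_num at hZ
      · exact core13 hF hp hq heq
      · norm_num at hZ
    · -- j = 4 : p i = v = p 4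
      have hj4' : j = 4 := by omega
      subst hj4'
      have h1 : p i = p 4 := by rw [heq, hqP.2.1 4 le_rfl, ← hpP.2.1 4 le_rfl]
      exact path_ne hpP (by omega) le_rfl h1
  intro p hp q hq i j hi hj heq
  rcases lt_trichotomy i j with h | h | h
  · exact absurd (no_col p hp q hq i j h hj heq) id
  · exact h
  · exact absurd (no_col q hq p hp j i h hi heq.symm) id
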